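/- arXiv:math/0009173 — 6 statements merged into one kernel-verified Lean document; each statement's English description precedes it below -/
import Mathlib

section
/- Suppose T^l(\alpha_i) = \alpha_{i+r} for all a \le i < b, where 0 < r \le b - a and l > 0, and T is (the additive extension of) a Belavin-Drinfeld triple map on the simple roots of sl(n). Let \alpha = e_c - e_{c+s} and \beta = e_d - e_{d+s} with s \ge r and a \le c < d \le b. Then \beta \not\prec \alpha, and if \alpha \prec \beta then Ord(\beta, -\alpha) = l(d-c)/r (in particular r divides d - c). -/
/-- Adjacency of simple roots `α_i`, `α_j` of `sl(n)` (equivalent to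
`(α_i, α_j) = -1`): the indices differ by one. -/
def Adj (i j : ℕ) : Prop := i + 1 = j ∨ j + 1 = i

/-- One application of the additive extension of `T` to positive roots.  A positive
root `e_i - e_j` (`i < j`) is encoded as the pair `(i, j)`; its simple-root support is
`Finset.Ico i j`.  `TStep T Γ1 α β` says that all simple constituents of `α` lie in
`Γ1` and that `T` maps the support of `α` onto the support of `β` (possibly reversing
orientation), i.e. `T α = β`. -/
def TStep (T : ℕ → ℕ) (Γ1 : Finset ℕ) (α β : ℕ × ℕ) : Prop :=
  α.1 < α.2 ∧ β.1 < β.2 ∧ Finset.Ico α.1 α.2 ⊆ Γ1 ∧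
    Finset.image T (Finset.Ico α.1 α.2) = Finset.Ico β.1 β.2

/-- `TIter T Γ1 k α β` says `T^k α = β` for positive roots `α`, `β`. -/
def TIter (T : ℕ → ℕ) (Γ1 : Finset ℕ) : ℕ → ℕ × ℕ → ℕ × ℕ → Prop
  | 0, α, β => α = β
  | k + 1, α, β => ∃ γ, TStep T Γ1 α γ ∧ TIter T Γ1 k γ β

/-- A Belavin–Drinfeld triple of type `A_{n-1}`: `Γ1, Γ2` are subsets of the simple
roots `{1, …, n-1}` of `sl(n)`, `T` restricts to a bijection `Γ1 → Γ2` preserving the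
inner product (equivalently, preserving adjacency), and `T` is nilpotent. -/
def BDTriple (n : ℕ) (Γ1 Γ2 : Finset ℕ) (T : ℕ → ℕ) : Prop :=
  Γ1 ⊆ Finset.Ico 1 n ∧ Γ2 ⊆ Finset.Ico 1 n ∧
    Set.BijOn T ↑Γ1 ↑Γ2 ∧
    (∀ i ∈ Γ1, ∀ j ∈ Γ1, (Adj (T i) (T j) ↔ Adj i j)) ∧
    (∀ i ∈ Γ1, ∃ k, 1 ≤ k ∧ T^[k] i ∉ Γ1)

/-! ### Auxiliary machinery -/

/-- Exit time of `x` from `Γ1` under iteration of `T`. -/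
noncomputable def NN (T : ℕ → ℕ) (Γ1 : Finset ℕ)
    (hnil : ∀ x, ∃ m, T^[m] x ∉ Γ1) (x : ℕ) : ℕ :=
  Nat.find (hnil x)

lemma NN_step (T : ℕ → ℕ) (Γ1 : Finset ℕ) (hnil : ∀ x, ∃ m, T^[m] x ∉ Γ1)
    {x : ℕ} (hx : x ∈ Γ1) : NN T Γ1 hnil x = NN T Γ1 hnil (T x) + 1 := by
  have h1 : NN T Γ1 hnil x ≤ NN T Γ1 hnil (T x) + 1 := by
    apply Nat.find_min'
    rw [Function.iterate_succ_apply]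
    exact Nat.find_spec (hnil (T x))
  have h0 : NN T Γ1 hnil x ≠ 0 := by
    intro h
    have := Nat.find_spec (hnil x)
    rw [show Nat.find (hnil x) = 0 from h] at this
    simp at this
    exact this hx
  obtain ⟨m, hm⟩ : ∃ m, NN T Γ1 hnil x = m + 1 :=
    ⟨NN T Γ1 hnil x - 1, by omega⟩
  have hspec := Nat.find_spec (hnil x)
  rw [show Nat.find (hnil x) = m + 1 from hm, Function.iterate_succ_apply] at hspec
  have h2 : NN T Γ1 hnil (T x) ≤ m := Nat.find_min' (hnil (T x)) hspec
  omega

lemma NN_chain (T : ℕ → ℕ) (Γ1 : Finset ℕ) (hnil : ∀ x, ∃ m, T^[m] x ∉ Γ1)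
    (K : ℕ) : ∀ {x : ℕ}, (∀ j, j < K → T^[j] x ∈ Γ1) →
    NN T Γ1 hnil x = NN T Γ1 hnil (T^[K] x) + K := by
  induction K with
  | zero => intro x _; simp
  | succ K ih =>
    intro x hx
    have hx0 : x ∈ Γ1 := by have := hx 0 (by omega); simpa using this
    rw [NN_step T Γ1 hnil hx0]
    have hTx : ∀ j, j < K → T^[j] (T x) ∈ Γ1 := by
      intro j hj
      rw [← Function.iterate_succ_apply]
      exact hx (j+1) (by omega)
    rw [ih hTx, ← Function.iterate_succ_apply]
    ring

/-- Pointwise description of `T^[K]` on the support of a root of length `s`: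
it shifts (`σ = true`) or flips (`σ = false`), with all intermediate points in `Γ1`. -/
def Ptw (T : ℕ → ℕ) (Γ1 : Finset ℕ) (s K p q : ℕ) (σ : Bool) : Prop :=
  ∀ t, t < s → (∀ j, j < K → T^[j] (p + t) ∈ Γ1) ∧
    T^[K] (p + t) = q + (if σ then t else s - 1 - t)

lemma ptw_comp {T : ℕ → ℕ} {Γ1 : Finset ℕ} {s K1 K2 p q z : ℕ} {σ1 σ2 : Bool}
    (h1 : Ptw T Γ1 s K1 p q σ1) (h2 : Ptw T Γ1 s K2 q z σ2) :
    Ptw T Γ1 s (K1 + K2) p z (σ1 == σ2) := by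
  intro t ht
  have hu : (if σ1 then t else s - 1 - t) < s := by cases σ1 <;> simp <;> omega
  have hkey : T^[K1] (p + t) = q + (if σ1 then t else s - 1 - t) := (h1 t ht).2
  constructor
  · intro j hj
    rcases Nat.lt_or_ge j K1 with h | h
    · exact (h1 t ht).1 j h
    · have : T^[j] (p + t) = T^[j - K1] (T^[K1] (p + t)) := by
        rw [← Function.iterate_add_apply]
        congr 1
        omega
      rw [this, hkey]
      exact (h2 _ hu).1 (j - K1) (by omega)
  · have : T^[K1 + K2] (p + t) = T^[K2] (T^[K1] (p + t)) := by
      rw [← Function.iterate_add_apply]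
      congr 1
      omega
    rw [this, hkey, (h2 _ hu).2]
    cases σ1 <;> cases σ2 <;> simp <;> omega

lemma ptw_peel {T : ℕ → ℕ} {Γ1 : Finset ℕ} {s K1 K2 p q z : ℕ} {σ1 σ2 : Bool}
    (h1 : Ptw T Γ1 s K1 p q σ1) (h2 : Ptw T Γ1 s K2 p z σ2) (hK : K1 ≤ K2) :
    Ptw T Γ1 s (K2 - K1) q z (σ1 == σ2) := by
  intro u hu
  have ht : (if σ1 then u else s - 1 - u) < s := by cases σ1 <;> simp <;> omega
  set t := if σ1 then u else s - 1 - u with htdef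
  have hqt : q + u = T^[K1] (p + t) := by
    have := (h1 t ht).2
    rw [this]
    cases σ1 <;> simp [htdef] <;> omega
  constructor
  · intro j hj
    rw [hqt, ← Function.iterate_add_apply]
    exact (h2 t ht).1 (j + K1) (by omega)
  · rw [hqt, ← Function.iterate_add_apply, show K2 - K1 + K1 = K2 from by omega,
      (h2 t ht).2]
    cases σ1 <;> cases σ2 <;> simp [htdef] <;> omega

/-- An injective, adjacency-preserving map between discrete intervals is a shift
or a flip. -/
lemma tstep_shape (T : ℕ → ℕ) (Γ1 : Finset ℕ)
    (hinj : Set.InjOn T ↑Γ1)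
    (hadj : ∀ i ∈ Γ1, ∀ j ∈ Γ1, Adj (T i) (T j) ↔ Adj i j)
    (p q s : ℕ) (hs : 1 ≤ s)
    (hsub : ∀ t, t < s → p + t ∈ Γ1)
    (himg : Finset.image T (Finset.Ico p (p+s)) = Finset.Ico q (q+s)) :
    (∀ t, t < s → T (p+t) = q + t) ∨ (∀ t, t < s → T (p+t) = q + (s-1-t)) := by
  have hran : ∀ t, t < s → q ≤ T (p+t) ∧ T (p+t) < q + s := by
    intro t ht
    have hmem : T (p+t) ∈ Finset.Ico q (q+s) := by
      rw [← himg]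
      exact Finset.mem_image_of_mem T (Finset.mem_Ico.mpr ⟨by omega, by omega⟩)
    simpa [Finset.mem_Ico] using hmem
  have hinj2 : ∀ t u, t < s → u < s → T (p+t) = T (p+u) → t = u := by
    intro t u ht hu he
    have := hinj (by exact_mod_cast hsub t ht) (by exact_mod_cast hsub u hu) he
    omega
  have hstep : ∀ t, t + 1 < s →
      T (p+(t+1)) = T (p+t) + 1 ∨ T (p+t) = T (p+(t+1)) + 1 := by
    intro t ht
    have hA : Adj (T (p+t)) (T (p+(t+1))) := by
      apply (hadj _ (hsub t (by omega)) _ (hsub (t+1) ht)).mpr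
      left
      omega
    rcases hA with h | h
    · left; omega
    · right; omega
  rcases Nat.lt_or_ge s 2 with hs1 | hs2
  · -- s = 1
    left
    intro t ht
    have ht0 : t = 0 := by omega
    have := hran t ht
    omega
  · rcases hstep 0 (by omega) with hup | hdown
    · left
      have key : ∀ t, t < s → T (p+t) = T (p+0) + t := by
        intro t
        induction t using Nat.strong_induction_on with
        | _ t ih =>
          intro ht
          match t with
          | 0 => simp
          | 1 => simpa using hup
          | (j+2) =>
            have h1 := ih (j+1) (by omega) (by omega)
            have h0 := ih j (by omega) (by omega)
            rcases hstep (j+1) ht with h | h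
            all_goals rw [show p + (j+1+1) = p + (j+2) from by ring] at h
            · omega
            · exfalso
              have : T (p+(j+2)) = T (p+j) := by omega
              have := hinj2 (j+2) j (by omega) (by omega) this
              omega
      have h0r := hran 0 (by omega)
      have hlast := key (s-1) (by omega)
      have hlr := hran (s-1) (by omega)
      intro t ht
      have := key t ht
      omega
    · right
      have key : ∀ t, t < s → T (p+t) + t = T (p+0) := by
        intro t
        induction t using Nat.strong_induction_on with
        | _ t ih =>
          intro ht
          match t with
          | 0 => simp
          | 1 => simpa using hdown.symm
          | (j+2) =>
            have h1 := ih (j+1) (by omega) (by omega)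
            have h0 := ih j (by omega) (by omega)
            rcases hstep (j+1) ht with h | h
            all_goals rw [show p + (j+1+1) = p + (j+2) from by ring] at h
            · exfalso
              have : T (p+(j+2)) = T (p+j) := by omega
              have := hinj2 (j+2) j (by omega) (by omega) this
              omega
            · omega
      have h0r := hran 0 (by omega)
      have hlast := key (s-1) (by omega)
      have hlr := hran (s-1) (by omega)
      intro t ht
      have := key t ht
      omega

/-- Iterated action of `T` on a root of length `s` is ± a shift. -/
lemma titer_ptw (T : ℕ → ℕ) (Γ1 : Finset ℕ)
    (hinj : Set.InjOn T ↑Γ1)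
    (hadj : ∀ i ∈ Γ1, ∀ j ∈ Γ1, Adj (T i) (T j) ↔ Adj i j)
    (s : ℕ) (hs : 1 ≤ s) :
    ∀ k p q, TIter T Γ1 k (p, p+s) (q, q+s) → ∃ σ : Bool, Ptw T Γ1 s k p q σ := by
  intro k
  induction k with
  | zero =>
    intro p q hit
    have hpq : p = q := by
      have : (p, p+s) = (q, q+s) := hit
      exact (Prod.mk.injEq _ _ _ _).mp this |>.1
    exact ⟨true, fun t ht => ⟨fun j hj => absurd hj (by omega), by simp [hpq]⟩⟩
  | succ k ih =>
    intro p q hit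
    obtain ⟨γ, hst, hiter⟩ := hit
    obtain ⟨hlt1, hlt2, hsub, himg⟩ := hst
    simp only at hlt1 hlt2 hsub himg
    have hsubt : ∀ t, t < s → p + t ∈ Γ1 := by
      intro t ht
      exact hsub (Finset.mem_Ico.mpr ⟨by omega, by omega⟩)
    have hcard : (Finset.Ico γ.1 γ.2).card = s := by
      rw [← himg, Finset.card_image_of_injOn
        (hinj.mono (Finset.coe_subset.mpr hsub))]
      simp [Nat.card_Ico]
    have hlen : γ.2 = γ.1 + s := by
      rw [Nat.card_Ico] at hcard
      omega
    have hit' : TIter T Γ1 k (γ.1, γ.1 + s) (q, q+s) := by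
      have : γ = (γ.1, γ.1 + s) := by
        rw [← hlen]
      rw [← this]
      exact hiter
    obtain ⟨σ2, hp2⟩ := ih γ.1 q hit'
    have himg' : Finset.image T (Finset.Ico p (p+s)) = Finset.Ico γ.1 (γ.1+s) := by
      rw [himg, hlen]
    rcases tstep_shape T Γ1 hinj hadj p γ.1 s hs hsubt himg' with hsh | hsh
    · have hp1 : Ptw T Γ1 s 1 p γ.1 true := by
        intro t ht
        refine ⟨fun j hj => ?_, ?_⟩
        · have : j = 0 := by omega
          subst this
          simpa using hsubt t ht
        · simpa using hsh t ht
      refine ⟨(true == σ2), ?_⟩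
      have := ptw_comp hp1 hp2
      rwa [show 1 + k = k + 1 from by omega] at this
    · have hp1 : Ptw T Γ1 s 1 p γ.1 false := by
        intro t ht
        refine ⟨fun j hj => ?_, ?_⟩
        · have : j = 0 := by omega
          subst this
          simpa using hsubt t ht
        · simpa using hsh t ht
      refine ⟨(false == σ2), ?_⟩
      have := ptw_comp hp1 hp2
      rwa [show 1 + k = k + 1 from by omega] at this

/-- Iteration on singleton roots is just function iteration, staying in `Γ1`. -/
lemma single_iter (T : ℕ → ℕ) (Γ1 : Finset ℕ) :
    ∀ m x β, TIter T Γ1 m (x, x+1) β →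
      (∀ j, j < m → T^[j] x ∈ Γ1) ∧ T^[m] x = β.1 ∧ β.2 = β.1 + 1 := by
  intro m
  induction m with
  | zero =>
    intro x β hit
    have : (x, x+1) = β := hit
    subst this
    exact ⟨fun j hj => absurd hj (by omega), by simp, rfl⟩
  | succ m ih =>
    intro x β hit
    obtain ⟨γ, hst, hiter⟩ := hit
    obtain ⟨hlt1, hlt2, hsub, himg⟩ := hst
    simp only at hlt1 hlt2 hsub himg
    have hxmem : x ∈ Γ1 := hsub (Finset.mem_Ico.mpr ⟨le_refl x, by omega⟩)
    have hsingle : Finset.Ico x (x+1) = {x} := by simp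
    rw [hsingle, Finset.image_singleton] at himg
    have hTx : T x ∈ Finset.Ico γ.1 γ.2 := by rw [← himg]; simp
    rw [Finset.mem_Ico] at hTx
    have hcard : (Finset.Ico γ.1 γ.2).card = 1 := by rw [← himg]; simp
    rw [Nat.card_Ico] at hcard
    have hg1 : γ.1 = T x := by omega
    have hg2 : γ.2 = T x + 1 := by omega
    have hit' : TIter T Γ1 m (T x, T x + 1) β := by
      have : γ = (T x, T x + 1) := by
        obtain ⟨g1, g2⟩ := γ
        simp only [Prod.mk.injEq]
        exact ⟨hg1, hg2⟩
      rw [← this]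
      exact hiter
    obtain ⟨hmem, hval, hlen⟩ := ih (T x) β hit'
    refine ⟨?_, ?_, hlen⟩
    · intro j hj
      match j with
      | 0 => simpa using hxmem
      | (j'+1) =>
        rw [Function.iterate_succ_apply]
        exact hmem j' (by omega)
    · rw [Function.iterate_succ_apply]
      exact hval

/-- A flip between overlapping intervals is impossible. -/
lemma ovl (T : ℕ → ℕ) (Γ1 : Finset ℕ) (hnil : ∀ x, ∃ m, T^[m] x ∉ Γ1)
    (s K p q : ℕ) (hp : Ptw T Γ1 s K p q false) (hK : 1 ≤ K) (hs : 1 ≤ s)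
    (h1 : q ≤ p + (s-1)) (h2 : p ≤ q + (s-1)) : False := by
  set G := q + (s-1) - p with hG
  set t := G / 2 with ht'
  set u := G - t with hu'
  have hG2 : G ≤ 2*(s-1) := by omega
  have hts : t < s := by omega
  have hus : u < s := by omega
  have e1 : q + (s-1-t) = p + u := by omega
  have e2 : q + (s-1-u) = p + t := by omega
  have n1 : NN T Γ1 hnil (p+t) = NN T Γ1 hnil (T^[K] (p+t)) + K :=
    NN_chain T Γ1 hnil K ((hp t hts).1)
  have n2 : NN T Γ1 hnil (p+u) = NN T Γ1 hnil (T^[K] (p+u)) + K :=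
    NN_chain T Γ1 hnil K ((hp u hus).1)
  rw [(hp t hts).2] at n1
  rw [(hp u hus).2] at n2
  rw [show q + (if (false : Bool) then t else s-1-t) = p + u from e1] at n1
  rw [show q + (if (false : Bool) then u else s-1-u) = p + t from e2] at n2
  omega

/-- Backward flips are impossible. -/
lemma flipb (T : ℕ → ℕ) (Γ1 : Finset ℕ) (hnil : ∀ x, ∃ m, T^[m] x ∉ Γ1)
    (s r l a b dt : ℕ) (hr : 1 ≤ r) (hrs : r ≤ s) (hs : 1 ≤ s)
    (hshptw : ∀ p, a ≤ p → p + s ≤ b → Ptw T Γ1 s l p (p+r) true)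
    (hdb : dt ≤ b) :
    ∀ g ct K, dt - ct ≤ g → 1 ≤ K → a ≤ ct → ct < dt →
      Ptw T Γ1 s K dt ct false → False := by
  intro g
  induction g with
  | zero => intro ct K hg _ _ hlt _; omega
  | succ g ih =>
    intro ct K hg hK hact hlt hp
    by_cases hov : dt ≤ ct + (s-1)
    · exact ovl T Γ1 hnil s K dt ct hp hK hs (by omega) hov
    · have hcs : ct + s ≤ dt := by omega
      have hsh := hshptw ct hact (by omega)
      have hcomp : Ptw T Γ1 s (K + l) dt (ct + r) false := by
        have := ptw_comp hp hsh
        simpa using this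
      by_cases he : ct + r = dt
      · rw [he] at hcomp
        exact ovl T Γ1 hnil s (K+l) dt dt hcomp (by omega) hs (by omega) (by omega)
      · exact ih (ct+r) (K+l) (by omega) (by omega) (by omega) (by omega) hcomp

/-- Forward flips are impossible (for `s ≥ 2`). -/
lemma flipf (T : ℕ → ℕ) (Γ1 : Finset ℕ) (hnil : ∀ x, ∃ m, T^[m] x ∉ Γ1)
    (s r l a b dd : ℕ) (hr : 1 ≤ r) (hrs : r ≤ s) (hl : 1 ≤ l) (hs2 : 2 ≤ s)
    (hshptw : ∀ p, a ≤ p → p + s ≤ b → Ptw T Γ1 s l p (p+r) true)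
    (hdb : dd ≤ b) :
    ∀ k c, 1 ≤ k → a ≤ c → c < dd → Ptw T Γ1 s k c dd false → False := by
  intro k
  induction k using Nat.strong_induction_on with
  | _ k ih =>
    intro c hk hac hlt hp
    have hs : 1 ≤ s := by omega
    by_cases hov : dd ≤ c + (s-1)
    · exact ovl T Γ1 hnil s k c dd hp hk hs hov (by omega)
    · have hcs : c + s ≤ dd := by omega
      have hsh := hshptw c hac (by omega)
      by_cases hkl : l ≤ k
      · have hpeel : Ptw T Γ1 s (k - l) (c + r) dd false := by
          have := ptw_peel hsh hp hkl
          simpa using this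
        by_cases hk0 : k - l = 0
        · have e0 := (hpeel 0 (by omega)).2
          have e1 := (hpeel 1 (by omega)).2
          rw [hk0] at e0 e1
          simp at e0 e1
          omega
        · by_cases he : c + r = dd
          · rw [he] at hpeel
            exact ovl T Γ1 hnil s (k-l) dd dd hpeel (by omega) hs (by omega) (by omega)
          · exact ih (k-l) (by omega) (c+r) (by omega) (by omega) (by omega) hpeel
      · push_neg at hkl
        have hpeel : Ptw T Γ1 s (l - k) dd (c + r) false := by
          have := ptw_peel hp hsh (le_of_lt hkl)
          simpa using this
        by_cases he : c + r = dd
        · rw [he] at hpeel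
          exact ovl T Γ1 hnil s (l-k) dd dd hpeel (by omega) hs (by omega) (by omega)
        · exact flipb T Γ1 hnil s r l a b dd hr hrs hs hshptw hdb
            (dd - (c+r)) (c+r) (l-k) le_rfl (by omega) (by omega) (by omega) hpeel

/-- If `T^l` acts on the simple roots `α_i`, `a ≤ i < b`, by shifting to the right by
`r` (`0 < r ≤ b - a`), then for roots `α = e_c - e_{c+s}` and `β = e_d - e_{d+s}` with
`s ≥ r` and `a ≤ c < d ≤ b`: `β ⊀ α`, and if `T^k α = β` (`k ≥ 1`) then
`k = l(d-c)/r`, i.e. `k·r = l·(d-c)`. -/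
theorem shift_order_formula (n l r a b s : ℕ) (Γ1 Γ2 : Finset ℕ) (T : ℕ → ℕ)
    (h : BDTriple n Γ1 Γ2 T) (hl : 0 < l) (hr : 0 < r) (hrb : r ≤ b - a)
    (hshift : ∀ i, a ≤ i → i < b → TIter T Γ1 l (i, i + 1) (i + r, i + r + 1))
    (c d : ℕ) (hs : r ≤ s) (hac : a ≤ c) (hcd : c < d) (hdb : d ≤ b) :
    (∀ k, 1 ≤ k → ¬ TIter T Γ1 k (d, d + s) (c, c + s)) ∧
    (∀ k, 1 ≤ k → TIter T Γ1 k (c, c + s) (d, d + s) → k * r = l * (d - c)) := by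
  obtain ⟨hG1sub, hG2sub, hbij, hadjA, hnilA⟩ := h
  have hinj : Set.InjOn T ↑Γ1 := hbij.injOn
  have hnil : ∀ x, ∃ m, T^[m] x ∉ Γ1 := by
    intro x
    by_cases hx : x ∈ Γ1
    · obtain ⟨m, _, hm2⟩ := hnilA x hx
      exact ⟨m, hm2⟩
    · exact ⟨0, by simpa using hx⟩
  have hs1 : 1 ≤ s := le_trans hr hs
  have hsing : ∀ i, a ≤ i → i < b →
      (∀ j, j < l → T^[j] i ∈ Γ1) ∧ T^[l] i = i + r := by
    intro i h1 h2
    have hres := single_iter T Γ1 l i _ (hshift i h1 h2)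
    exact ⟨hres.1, hres.2.1⟩
  have hshptw : ∀ p, a ≤ p → p + s ≤ b → Ptw T Γ1 s l p (p+r) true := by
    intro p h1 h2 t ht
    obtain ⟨hmem, hval⟩ := hsing (p+t) (by omega) (by omega)
    refine ⟨hmem, ?_⟩
    show T^[l] (p + t) = p + r + t
    rw [hval]
    omega
  have hB : ∀ i, a ≤ i → i < b →
      NN T Γ1 hnil i = NN T Γ1 hnil (i+r) + l := by
    intro i h1 h2
    obtain ⟨hmem, hval⟩ := hsing i h1 h2
    have := NN_chain T Γ1 hnil l hmem
    rwa [hval] at this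
  -- telescoping identity
  have hT1 : (∑ x ∈ Finset.range r, NN T Γ1 hnil (c+x))
      = (∑ x ∈ Finset.range r, NN T Γ1 hnil (d+x)) + (d-c)*l := by
    have e1 : ∑ x ∈ Finset.Ico c d, NN T Γ1 hnil x
        = (∑ x ∈ Finset.Ico c d, NN T Γ1 hnil (x+r)) + (d-c)*l := by
      calc ∑ x ∈ Finset.Ico c d, NN T Γ1 hnil x
          = ∑ x ∈ Finset.Ico c d, (NN T Γ1 hnil (x+r) + l) :=
            Finset.sum_congr rfl (fun x hx => by
              rw [Finset.mem_Ico] at hx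
              exact hB x (by omega) (by omega))
        _ = (∑ x ∈ Finset.Ico c d, NN T Γ1 hnil (x+r))
            + (∑ _x ∈ Finset.Ico c d, l) := Finset.sum_add_distrib
        _ = (∑ x ∈ Finset.Ico c d, NN T Γ1 hnil (x+r)) + (d-c)*l := by
            rw [Finset.sum_const, Nat.card_Ico, smul_eq_mul]
    have e2 : ∑ x ∈ Finset.Ico c d, NN T Γ1 hnil (x+r)
        = ∑ x ∈ Finset.Ico (c+r) (d+r), NN T Γ1 hnil x := by
      rw [Finset.sum_Ico_eq_sum_range, Finset.sum_Ico_eq_sum_range]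
      have : d + r - (c + r) = d - c := by omega
      rw [this]
      apply Finset.sum_congr rfl
      intro x _
      congr 1
      omega
    have e3 : (∑ x ∈ Finset.Ico c d, NN T Γ1 hnil x)
        + (∑ x ∈ Finset.Ico d (d+r), NN T Γ1 hnil x)
        = ∑ x ∈ Finset.Ico c (d+r), NN T Γ1 hnil x :=
      Finset.sum_Ico_consecutive _ (by omega) (by omega)
    have e4 : (∑ x ∈ Finset.Ico c (c+r), NN T Γ1 hnil x)
        + (∑ x ∈ Finset.Ico (c+r) (d+r), NN T Γ1 hnil x)
        = ∑ x ∈ Finset.Ico c (d+r), NN T Γ1 hnil x :=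
      Finset.sum_Ico_consecutive _ (by omega) (by omega)
    have e5 : ∑ x ∈ Finset.Ico c (c+r), NN T Γ1 hnil x
        = ∑ x ∈ Finset.range r, NN T Γ1 hnil (c+x) := by
      rw [Finset.sum_Ico_eq_sum_range, show c + r - c = r from by omega]
    have e6 : ∑ x ∈ Finset.Ico d (d+r), NN T Γ1 hnil x
        = ∑ x ∈ Finset.range r, NN T Γ1 hnil (d+x) := by
      rw [Finset.sum_Ico_eq_sum_range, show d + r - d = r from by omega]
    rw [e2] at e1
    rw [← e5, ← e6]
    set A := ∑ x ∈ Finset.Ico c d, NN T Γ1 hnil x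
    set B := ∑ x ∈ Finset.Ico (c+r) (d+r), NN T Γ1 hnil x
    set C1 := ∑ x ∈ Finset.Ico c (c+r), NN T Γ1 hnil x
    set C2 := ∑ x ∈ Finset.Ico d (d+r), NN T Γ1 hnil x
    set C3 := ∑ x ∈ Finset.Ico c (d+r), NN T Γ1 hnil x
    set X := (d-c)*l
    omega
  -- the shift (σ = true) case, forward
  have hfwd : ∀ k, 1 ≤ k → Ptw T Γ1 s k c d true → k * r = l * (d - c) := by
    intro k hk hp
    have hsum : (∑ x ∈ Finset.range r, NN T Γ1 hnil (c+x))
        = (∑ x ∈ Finset.range r, NN T Γ1 hnil (d+x)) + r*k := by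
      calc ∑ x ∈ Finset.range r, NN T Γ1 hnil (c+x)
          = ∑ x ∈ Finset.range r, (NN T Γ1 hnil (d+x) + k) :=
            Finset.sum_congr rfl (fun x hx => by
              have hxs : x < s := by
                have := Finset.mem_range.1 hx
                omega
              have hch := NN_chain T Γ1 hnil k ((hp x hxs).1)
              rw [(hp x hxs).2] at hch
              exact hch)
        _ = (∑ x ∈ Finset.range r, NN T Γ1 hnil (d+x))
            + (∑ _x ∈ Finset.range r, k) := Finset.sum_add_distrib
        _ = (∑ x ∈ Finset.range r, NN T Γ1 hnil (d+x)) + r*k := by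
            rw [Finset.sum_const, Finset.card_range, smul_eq_mul]
    have hrk : (d-c)*l = r*k := by
      set S1 := ∑ x ∈ Finset.range r, NN T Γ1 hnil (c+x)
      set S2 := ∑ x ∈ Finset.range r, NN T Γ1 hnil (d+x)
      set X := (d-c)*l
      set Y := r*k
      omega
    calc k*r = r*k := Nat.mul_comm _ _
      _ = (d-c)*l := hrk.symm
      _ = l*(d-c) := Nat.mul_comm _ _
  refine ⟨?_, ?_⟩
  · -- no backward iteration
    intro k hk hit
    obtain ⟨σ, hp⟩ := titer_ptw T Γ1 hinj hadjA s hs1 k d c hit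
    cases σ with
    | true =>
      have hsum : (∑ x ∈ Finset.range r, NN T Γ1 hnil (d+x))
          = (∑ x ∈ Finset.range r, NN T Γ1 hnil (c+x)) + r*k := by
        calc ∑ x ∈ Finset.range r, NN T Γ1 hnil (d+x)
            = ∑ x ∈ Finset.range r, (NN T Γ1 hnil (c+x) + k) :=
              Finset.sum_congr rfl (fun x hx => by
                have hxs : x < s := by
                  have := Finset.mem_range.1 hx
                  omega
                have hch := NN_chain T Γ1 hnil k ((hp x hxs).1)
                rw [(hp x hxs).2] at hch
                exact hch)
          _ = (∑ x ∈ Finset.range r, NN T Γ1 hnil (c+x))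
              + (∑ _x ∈ Finset.range r, k) := Finset.sum_add_distrib
          _ = (∑ x ∈ Finset.range r, NN T Γ1 hnil (c+x)) + r*k := by
              rw [Finset.sum_const, Finset.card_range, smul_eq_mul]
      have hpos : 0 < (d-c)*l := Nat.mul_pos (by omega) hl
      set S1 := ∑ x ∈ Finset.range r, NN T Γ1 hnil (c+x)
      set S2 := ∑ x ∈ Finset.range r, NN T Γ1 hnil (d+x)
      set X := (d-c)*l
      set Y := r*k
      omega
    | false =>
      exact flipb T Γ1 hnil s r l a b d hr hs hs1 hshptw hdb
        (d - c) c k le_rfl hk hac hcd hp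
  · -- forward iteration forces the order formula
    intro k hk hit
    obtain ⟨σ, hp⟩ := titer_ptw T Γ1 hinj hadjA s hs1 k c d hit
    cases σ with
    | true => exact hfwd k hk hp
    | false =>
      by_cases hs2 : 2 ≤ s
      · exact absurd (flipf T Γ1 hnil s r l a b d hr hs hl hs2 hshptw hdb
          k c hk hac hcd hp) not_false
      · have hseq : s = 1 := by omega
        have hp' : Ptw T Γ1 s k c d true := by
          intro t ht
          have ht0 : t = 0 := by omega
          obtain ⟨h1, h2⟩ := hp t ht
          refine ⟨h1, ?_⟩
          rw [h2]
          subst ht0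
          simp [hseq]
        exact hfwd k hk hp'
end

section
/- Let (T,\Gamma_1,\Gamma_2) be a Belavin-Drinfeld triple for sl(n), and for \alpha \in \tilde\Gamma_1 let M_\alpha be the smallest positive integer with T^{M_\alpha - 1}\alpha \in \tilde\Gamma_2 \setminus \tilde\Gamma_1, let c_\alpha be the smallest positive integer less than M_\alpha with T^{c_\alpha}\alpha \not\perp \alpha (c_\alpha = \infty if none exists), and let d_\alpha be the smallest positive integer d < M_\alpha not a multiple of c_\alpha with T^d\alpha \not\perp \alpha (d_\alpha = \infty if none). If c_\alpha, d_\alpha < \infty, then: (i) every positive integer d < M_\alpha with T^d\alpha \not\perp \alpha is either a multiple of c_\alpha or equals d_\alpha; and (ii) d_\alpha + c_\alpha - gcd(c_\alpha, d_\alpha) \ge M_\alpha and T^{d_\alpha}\alpha \perp T^{c_\alpha}\alpha. -/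
/-- Orthogonality of the positive roots `e_{α₁} - e_{α₂}` and `e_{β₁} - e_{β₂}`,
viewed as segments of `[1, n]`: they are disjoint and non-adjacent. -/
def Perp (α β : ℕ × ℕ) : Prop := α.2 < β.1 ∨ β.2 < α.1

/-- The positive root `α` lies in the span of `Γ` (i.e. `α ∈ Γ̃`). -/
def InG (Γ : Finset ℕ) (α : ℕ × ℕ) : Prop := Finset.Ico α.1 α.2 ⊆ Γ

namespace BDaux

variable {T : ℕ → ℕ} {Γ1 Γ2 : Finset ℕ}

lemma ico_eq_ico {a b c d : ℕ} (hab : a < b) (h : Finset.Ico a b = Finset.Ico c d) :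
    a = c ∧ b = d := by
  have h1 : a ∈ Finset.Ico c d := h ▸ Finset.mem_Ico.mpr ⟨le_refl a, hab⟩
  rw [Finset.mem_Ico] at h1
  have hcd : c < d := lt_of_le_of_lt h1.1 h1.2
  have h2 : c ∈ Finset.Ico a b := h.symm ▸ Finset.mem_Ico.mpr ⟨le_refl c, hcd⟩
  have h3 : b - 1 ∈ Finset.Ico c d := h ▸ Finset.mem_Ico.mpr (by omega)
  have h4 : d - 1 ∈ Finset.Ico a b := h.symm ▸ Finset.mem_Ico.mpr (by omega)
  rw [Finset.mem_Ico] at h2 h3 h4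
  omega

lemma tstep_unique {α β γ : ℕ × ℕ} (h1 : TStep T Γ1 α β) (h2 : TStep T Γ1 α γ) :
    β = γ := by
  obtain ⟨_, hb, _, hib⟩ := h1
  obtain ⟨_, hg, _, hig⟩ := h2
  have := ico_eq_ico hb (hib.symm.trans hig)
  exact Prod.ext this.1 this.2

lemma titer_unique : ∀ k (α β γ : ℕ × ℕ), TIter T Γ1 k α β → TIter T Γ1 k α γ → β = γ := by
  intro k
  induction k with
  | zero => intro α β γ h1 h2; exact h1.symm.trans h2
  | succ k ih =>
    rintro α β γ ⟨δ, hδ, h1⟩ ⟨ε, hε, h2⟩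
    have := tstep_unique hδ hε
    subst this
    exact ih _ _ _ h1 h2

lemma titer_succ {m : ℕ} {α β : ℕ × ℕ} :
    TIter T Γ1 (m + 1) α β ↔ ∃ γ, TStep T Γ1 α γ ∧ TIter T Γ1 m γ β := Iff.rfl

lemma titer_add : ∀ (j k : ℕ) (α β : ℕ × ℕ),
    TIter T Γ1 (j + k) α β ↔ ∃ γ, TIter T Γ1 j α γ ∧ TIter T Γ1 k γ β := by
  intro j
  induction j with
  | zero => intro k α β; simp only [Nat.zero_add]
            exact ⟨fun h => ⟨α, rfl, h⟩, by rintro ⟨γ, hγ, h⟩; rw [show α = γ from hγ]; exact h⟩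
  | succ j ih =>
    intro k α β
    rw [show j + 1 + k = (j + k) + 1 by omega, titer_succ]
    constructor
    · rintro ⟨δ, hδ, h⟩
      obtain ⟨γ, h1, h2⟩ := (ih k δ β).mp h
      exact ⟨γ, ⟨δ, hδ, h1⟩, h2⟩
    · rintro ⟨γ, ⟨δ, hδ, h1⟩, h2⟩
      exact ⟨δ, hδ, (ih k δ β).mpr ⟨γ, h1, h2⟩⟩

lemma titer_prefix {k : ℕ} {α β : ℕ × ℕ} (h : TIter T Γ1 k α β) {j : ℕ} (hj : j ≤ k) :
    ∃ γ, TIter T Γ1 j α γ := by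
  obtain ⟨m, rfl⟩ := Nat.exists_eq_add_of_le hj
  obtain ⟨γ, h1, _⟩ := (titer_add j m α β).mp h
  exact ⟨γ, h1⟩

lemma nonperp_iff {a1 a2 b1 b2 : ℕ} (ha : a1 < a2) (hb : b1 < b2) :
    ¬ Perp (a1, a2) (b1, b2) ↔
      ∃ u v, u ∈ Finset.Ico a1 a2 ∧ v ∈ Finset.Ico b1 b2 ∧ (u = v ∨ Adj u v) := by
  simp only [Perp, Finset.mem_Ico, Adj, not_or, not_lt]
  constructor
  · rintro ⟨h1, h2⟩
    by_cases hc : b1 ≥ a2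
    · exact ⟨a2 - 1, b1, by omega, by omega, by omega⟩
    · by_cases hc2 : a1 ≥ b2
      · exact ⟨a1, b2 - 1, by omega, by omega, by omega⟩
      · exact ⟨max a1 b1, max a1 b1, by omega, by omega, by omega⟩
  · rintro ⟨u, v, hu, hv, huv⟩
    omega

lemma perp_equiv (hadj : ∀ i ∈ Γ1, ∀ j ∈ Γ1, (Adj (T i) (T j) ↔ Adj i j))
    (hinj : Set.InjOn T ↑Γ1)
    {a b a' b' : ℕ × ℕ} (h1 : TStep T Γ1 a b) (h2 : TStep T Γ1 a' b') :
    Perp b b' ↔ Perp a a' := by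
  obtain ⟨ha, hb, hs, hi⟩ := h1
  obtain ⟨ha', hb', hs', hi'⟩ := h2
  rw [← not_iff_not]
  rw [show a = (a.1, a.2) from rfl, show b = (b.1, b.2) from rfl] at *
  rw [show a' = (a'.1, a'.2) from rfl, show b' = (b'.1, b'.2) from rfl] at *
  rw [nonperp_iff hb hb', nonperp_iff ha ha']
  constructor
  · rintro ⟨x, y, hx, hy, hxy⟩
    rw [← hi, Finset.mem_image] at hx
    rw [← hi', Finset.mem_image] at hy
    obtain ⟨u, hu, rfl⟩ := hx
    obtain ⟨v, hv, rfl⟩ := hy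
    refine ⟨u, v, hu, hv, ?_⟩
    rcases hxy with h | h
    · exact Or.inl (hinj (hs hu) (hs' hv) h)
    · exact Or.inr ((hadj u (hs hu) v (hs' hv)).mp h)
  · rintro ⟨u, v, hu, hv, huv⟩
    refine ⟨T u, T v, ?_, ?_, ?_⟩
    · rw [← hi]; exact Finset.mem_image_of_mem T hu
    · rw [← hi']; exact Finset.mem_image_of_mem T hv
    · rcases huv with h | h
      · exact Or.inl (congrArg T h)
      · exact Or.inr ((hadj u (hs hu) v (hs' hv)).mpr h)

lemma tstep_len (hinj : Set.InjOn T ↑Γ1) {a b : ℕ × ℕ} (h : TStep T Γ1 a b) :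
    b.2 - b.1 = a.2 - a.1 := by
  obtain ⟨ha, hb, hs, hi⟩ := h
  have h1 : (Finset.image T (Finset.Ico a.1 a.2)).card = (Finset.Ico a.1 a.2).card := by
    apply Finset.card_image_of_injOn
    exact hinj.mono (by exact_mod_cast hs)
  rw [hi] at h1
  simpa using h1

lemma lag_contra (b : ℕ → ℤ) (L : ℤ) (g c' d' x w N : ℕ)
    (hc1 : 0 < c') (hd1 : 0 < d')
    (hx0 : 0 < x) (hxlt : x < c' + d')
    (hw : (w * c') % (c' + d') = x)
    (hN : g * (c' + d' - 1) ≤ N)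
    (hL : 0 ≤ L)
    (hclc : ∀ j, j + g * c' ≤ N → |b (j + g * c') - b j| ≤ L)
    (hcld : ∀ j, j + g * d' ≤ N → |b (j + g * d') - b j| ≤ L)
    (hfx : ∀ j, j + g * x ≤ N → L < |b (j + g * x) - b j|)
    (hfy : ∀ j, j + g * (c' + d' - x) ≤ N → L < |b (j + g * (c' + d' - x)) - b j|) :
    False := by
  set π := c' + d' with hπdef
  have hπ0 : 0 < π := by omega
  set q : ℕ → ℕ := fun i => (i * c') % π with hq
  set Q : ℕ → ℕ := fun i => g * q i with hQ
  have hqlt : ∀ i, q i < π := fun i => Nat.mod_lt _ hπ0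
  have hQle : ∀ i, Q i ≤ g * (π - 1) := by
    intro i; exact Nat.mul_le_mul_left g (by have := hqlt i; omega)
  have hqsucc : ∀ i, q (i + 1) = (q i + c') % π := by
    intro i
    simp only [hq]
    rw [Nat.add_mul, Nat.one_mul, Nat.add_mod, Nat.mod_eq_of_lt (show c' < π by omega)]
  have hstep : ∀ i, |b (Q (i + 1)) - b (Q i)| ≤ L := by
    intro i
    rcases lt_or_ge (q i + c') π with hlt | hge
    · have he : q (i + 1) = q i + c' := by rw [hqsucc, Nat.mod_eq_of_lt hlt]
      have hQe : Q (i + 1) = Q i + g * c' := by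
        simp only [hQ, he, Nat.mul_add]
      rw [hQe]
      exact hclc _ (by rw [← hQe]; calc Q (i+1) ≤ g * (π - 1) := hQle _
                                      _ ≤ N := hN)
    · have hv : q i + c' - π < π := by have := hqlt i; omega
      have he : q (i + 1) = q i + c' - π := by
        rw [hqsucc, Nat.mod_eq_sub_mod hge, Nat.mod_eq_of_lt hv]
      have hQe : Q i = Q (i + 1) + g * d' := by
        have h2 : q i = (q i + c' - π) + d' := by omega
        show g * q i = g * q (i + 1) + g * d'
        rw [he, ← Nat.mul_add, ← h2]
      rw [hQe, abs_sub_comm]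
      exact hcld _ (by rw [← hQe]; calc Q i ≤ g * (π - 1) := hQle _
                                    _ ≤ N := hN)
  have hqlag : ∀ i, q (i + w) = (q i + x) % π := by
    intro i
    simp only [hq]
    rw [Nat.add_mul, Nat.add_mod, hw]
  have hlag : ∀ i, L < |b (Q (i + w)) - b (Q i)| := by
    intro i
    rcases lt_or_ge (q i + x) π with hlt | hge
    · have he : q (i + w) = q i + x := by rw [hqlag, Nat.mod_eq_of_lt hlt]
      have hQe : Q (i + w) = Q i + g * x := by simp only [hQ, he, Nat.mul_add]
      rw [hQe]
      exact hfx _ (by rw [← hQe]; calc Q (i+w) ≤ g * (π - 1) := hQle _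
                                   _ ≤ N := hN)
    · have hv : q i + x - π < π := by have := hqlt i; omega
      have he : q (i + w) = q i + x - π := by
        rw [hqlag, Nat.mod_eq_sub_mod hge, Nat.mod_eq_of_lt hv]
      have hQe : Q i = Q (i + w) + g * (π - x) := by
        have h2 : q i = (q i + x - π) + (π - x) := by omega
        show g * q i = g * q (i + w) + g * (π - x)
        rw [he, ← Nat.mul_add, ← h2]
      rw [hQe, abs_sub_comm]
      exact hfy _ (by rw [← hQe]; calc Q i ≤ g * (π - 1) := hQle _
                                   _ ≤ N := hN)
  have hdir : ∀ i, (b (Q i) < b (Q (i + w))) ↔ (b (Q (i + 1)) < b (Q (i + 1 + w))) := by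
    intro i
    have h1 := hstep i
    have h2 := hstep (i + w)
    have h3 := hlag i
    have h4 := hlag (i + 1)
    rw [show i + 1 + w = i + w + 1 by omega] at h4 ⊢
    rw [abs_le] at h1 h2
    rw [lt_abs] at h3 h4
    constructor <;> intro <;> omega
  have hP0 : ∀ i, (b (Q 0) < b (Q w)) ↔ (b (Q i) < b (Q (i + w))) := by
    intro i
    induction i with
    | zero => simp
    | succ i ih => exact ih.trans (hdir i)
  have hQper : Q (π * w) = Q 0 := by
    have h2 : q (π * w) = q 0 := by
      simp only [hq]
      rw [Nat.zero_mul, show π * w * c' = π * (w * c') by ring, Nat.mul_mod_right, Nat.zero_mod]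
    simp only [hQ, h2]
  rcases lt_or_ge (b (Q 0)) (b (Q w)) with hP | hP
  · have hchain : ∀ k, b (Q 0) + k * (L + 1) ≤ b (Q (k * w)) := by
      intro k
      induction k with
      | zero => simp
      | succ k ih =>
        have hp := (hP0 (k * w)).mp hP
        have hl := hlag (k * w)
        rw [lt_abs] at hl
        have : b (Q (k * w)) + (L + 1) ≤ b (Q (k * w + w)) := by omega
        rw [show (k + 1) * w = k * w + w by ring]
        push_cast
        linarith
    have := hchain π
    rw [hQper] at this
    have h1 : (1 : ℤ) ≤ π := by exact_mod_cast hπ0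
    nlinarith
  · have hchain : ∀ k, b (Q (k * w)) ≤ b (Q 0) - k * (L + 1) := by
      intro k
      induction k with
      | zero => simp
      | succ k ih =>
        have hp := (hP0 (k * w)).not.mp (by omega)
        have hl := hlag (k * w)
        rw [lt_abs] at hl
        push_neg at hp
        have : b (Q (k * w + w)) ≤ b (Q (k * w)) - (L + 1) := by omega
        rw [show (k + 1) * w = k * w + w by ring]
        push_cast
        linarith
    have := hchain π
    rw [hQper] at this
    have h1 : (1 : ℤ) ≤ π := by exact_mod_cast hπ0
    nlinarith

end BDaux

/-- The key combinatorial lemma on Belavin–Drinfeld triples.  Let `M = M_α` be the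
smallest positive integer with `T^{M-1} α ∈ Γ̃₂ \ Γ̃₁`, `c = c_α` the smallest positive
integer `< M` with `T^c α ⊥̸ α`, and `d = d_α` the smallest positive integer `< M`,
not a multiple of `c`, with `T^d α ⊥̸ α`.  Then: (i) every positive `k < M` with
`T^k α ⊥̸ α` is a multiple of `c` or equals `d`; and (ii) `d + c - gcd(c,d) ≥ M` and
`T^d α ⊥ T^c α`. -/
theorem key_combinatorial_lemma (n : ℕ) (Γ1 Γ2 : Finset ℕ) (T : ℕ → ℕ)
    (h : BDTriple n Γ1 Γ2 T) (α : ℕ × ℕ) (hα : α.1 < α.2) (hαΓ : InG Γ1 α)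
    (M c d : ℕ) (hM0 : 0 < M)
    (hM : ∃ β, TIter T Γ1 (M - 1) α β ∧ ¬ InG Γ1 β)
    (hMmin : ∀ k < M - 1, ∀ β, TIter T Γ1 k α β → InG Γ1 β)
    (hc0 : 0 < c) (hcM : c < M)
    (hc : ∃ β, TIter T Γ1 c α β ∧ ¬ Perp β α)
    (hcmin : ∀ k, 0 < k → k < c → ∀ β, TIter T Γ1 k α β → Perp β α)
    (hd0 : 0 < d) (hdM : d < M) (hdc : ¬ c ∣ d)
    (hd : ∃ β, TIter T Γ1 d α β ∧ ¬ Perp β α)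
    (hdmin : ∀ k, 0 < k → k < d → ¬ c ∣ k → ∀ β, TIter T Γ1 k α β → Perp β α) :
    (∀ k, 0 < k → k < M → (∃ β, TIter T Γ1 k α β ∧ ¬ Perp β α) → c ∣ k ∨ k = d) ∧
      M ≤ d + c - Nat.gcd c d ∧
      (∀ β γ, TIter T Γ1 d α β → TIter T Γ1 c α γ → Perp β γ) := by
  classical
  obtain ⟨hΓ1s, hΓ2s, hbij, hadj, hnil⟩ := h
  have hinj : Set.InjOn T ↑Γ1 := hbij.injOn
  set N := M - 1 with hNdef
  have hcN : c ≤ N := by omega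
  have hdN : d ≤ N := by omega
  obtain ⟨ω, hω, hωG⟩ := hM
  have hex : ∀ k, ∃ β, k ≤ N → TIter T Γ1 k α β := by
    intro k
    by_cases hk : k ≤ N
    · obtain ⟨β, hβ⟩ := BDaux.titer_prefix hω hk
      exact ⟨β, fun _ => hβ⟩
    · exact ⟨α, fun hh => absurd hh hk⟩
  choose r hr using hex
  have hr0 : r 0 = α := (hr 0 (by omega)).symm
  have hstep : ∀ k, k + 1 ≤ N → TStep T Γ1 (r k) (r (k + 1)) := by
    intro k hk
    have h1 := hr (k + 1) hk
    obtain ⟨γ, hγ1, hγ2⟩ := (BDaux.titer_add k 1 α (r (k + 1))).mp h1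
    have hγr : γ = r k := BDaux.titer_unique _ _ _ _ hγ1 (hr k (by omega))
    obtain ⟨δ, hδ, hδ2⟩ := hγ2
    have hδ2' : δ = r (k + 1) := hδ2
    rw [hγr, hδ2'] at hδ
    exact hδ
  set L : ℕ := α.2 - α.1 with hLdef
  have hL1 : 1 ≤ L := by omega
  have hlen : ∀ k, k ≤ N → (r k).2 = (r k).1 + L := by
    intro k
    induction k with
    | zero => intro _; rw [hr0]; omega
    | succ k ih =>
      intro hk
      have h1 := BDaux.tstep_len hinj (hstep k hk)
      have h2 := (hstep k hk).1
      have h3 := (hstep k hk).2.1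
      have h4 := ih (by omega)
      omega
  set b : ℕ → ℤ := fun k => ((r k).1 : ℤ) with hbdef
  have PerpIff : ∀ j k, j ≤ N → k ≤ N → (Perp (r k) (r j) ↔ (L : ℤ) < |b k - b j|) := by
    intro j k hj hk
    have h1 := hlen j hj
    have h2 := hlen k hk
    simp only [Perp, hbdef, lt_abs]
    omega
  -- uniformity
  have U : ∀ v, 0 < v → ∀ j, j + v ≤ N → (Perp (r (j + v)) (r j) ↔ Perp (r v) (r 0)) := by
    intro v hv j
    induction j with
    | zero => intro _; rw [Nat.zero_add]
    | succ j ih =>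
      intro hj
      have e1 : Perp (r (j + 1 + v)) (r (j + 1)) ↔ Perp (r (j + v)) (r j) := by
        rw [show j + 1 + v = (j + v) + 1 by omega]
        exact BDaux.perp_equiv hadj hinj (hstep (j + v) (by omega)) (hstep j (by omega))
      exact e1.trans (ih (by omega))
  have NumIff : ∀ v j, 0 < v → j + v ≤ N →
      ((L : ℤ) < |b (j + v) - b j| ↔ (L : ℤ) < |b v - b 0|) := by
    intro v j hv hj
    rw [← PerpIff j (j + v) (by omega) hj, ← PerpIff 0 v (by omega) (by omega)]
    exact U v hv j hj
  -- basic distance facts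
  have Fc : ¬ ((L : ℤ) < |b c - b 0|) := by
    obtain ⟨β, hβ, hβp⟩ := hc
    have hβr : β = r c := BDaux.titer_unique _ _ _ _ hβ (hr c hcN)
    rw [hβr, ← hr0] at hβp
    exact fun hh => hβp ((PerpIff 0 c (by omega) hcN).mpr hh)
  have Fd : ¬ ((L : ℤ) < |b d - b 0|) := by
    obtain ⟨β, hβ, hβp⟩ := hd
    have hβr : β = r d := BDaux.titer_unique _ _ _ _ hβ (hr d hdN)
    rw [hβr, ← hr0] at hβp
    exact fun hh => hβp ((PerpIff 0 d (by omega) hdN).mpr hh)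
  have Fmin : ∀ v, 0 < v → v < c → (L : ℤ) < |b v - b 0| := by
    intro v hv hvc
    have hp := hcmin v hv hvc (r v) (hr v (by omega))
    rw [← hr0] at hp
    exact (PerpIff 0 v (by omega) (by omega)).mp hp
  have Fdmin : ∀ v, 0 < v → v < d → ¬ c ∣ v → (L : ℤ) < |b v - b 0| := by
    intro v hv hvd hvc
    have hp := hdmin v hv hvd hvc (r v) (hr v (by omega))
    rw [← hr0] at hp
    exact (PerpIff 0 v (by omega) (by omega)).mp hp
  have hcd : c < d := by
    rcases lt_trichotomy c d with h1 | h1 | h1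
    · exact h1
    · exact absurd (h1 ▸ dvd_refl c) hdc
    · exact absurd (Fmin d hd0 h1) Fd
  have hc2 : 2 ≤ c := by
    rcases Nat.lt_or_ge c 2 with h1 | h1
    · have hc1 : c = 1 := by omega
      exact absurd (hc1 ▸ one_dvd d) hdc
    · exact h1
  -- the squeeze lemma: every close distance ≤ c+d-1 is a multiple of c or d
  have FarAll : ∀ v, 0 < v → v ≤ N → v ≤ c + d - 1 → ¬ c ∣ v → v ≠ d →
      (L : ℤ) < |b v - b 0| := by
    intro v hv hvN hvcd hvc hvd
    rcases lt_trichotomy v d with h1 | h1 | h1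
    · exact Fdmin v hv h1 hvc
    · exact absurd h1 hvd
    · -- d < v ≤ c+d-1 : squeeze
      by_contra hcl
      have A1 : ¬ ((L : ℤ) < |b v - b (v - c)|) := by
        have := NumIff c (v - c) hc0 (by omega)
        rw [show v - c + c = v by omega] at this
        exact fun hh => Fc (this.mp hh)
      have A2 : ¬ ((L : ℤ) < |b v - b (v - d)|) := by
        have := NumIff d (v - d) hd0 (by omega)
        rw [show v - d + d = v by omega] at this
        exact fun hh => Fd (this.mp hh)
      have A3 : (L : ℤ) < |b (v - c) - b 0| := by
        apply Fdmin (v - c) (by omega) (by omega)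
        intro hdvd
        exact hvc (by have : v = (v - c) + c := by omega
                      rw [this]; exact Nat.dvd_add hdvd dvd_rfl)
      have A4 : (L : ℤ) < |b (v - d) - b 0| := Fmin (v - d) (by omega) (by omega)
      have A5 : (L : ℤ) < |b (v - c) - b (v - d)| := by
        have hnum := NumIff (d - c) (v - d) (by omega) (by omega)
        rw [show v - d + (d - c) = v - c by omega] at hnum
        apply hnum.mpr
        apply Fdmin (d - c) (by omega) (by omega)
        intro hdvd
        exact hdc (by have : d = (d - c) + c := by omega
                      rw [this]; exact Nat.dvd_add hdvd dvd_rfl)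
      rw [not_lt] at hcl A1 A2
      rw [lt_abs] at A3 A4 A5
      rw [abs_le] at hcl A1 A2
      omega
  -- main bound
  have hBound : M ≤ c + d - Nat.gcd c d := by
    by_contra hcon
    push_neg at hcon
    set g := Nat.gcd c d with hgdef
    have hg0 : 0 < g := Nat.gcd_pos_of_pos_left _ hc0
    have hgc : g ∣ c := Nat.gcd_dvd_left c d
    have hgd : g ∣ d := Nat.gcd_dvd_right c d
    set c' := c / g with hc'def
    set d' := d / g with hd'def
    have hcc : c = g * c' := (Nat.mul_div_cancel' hgc).symm
    have hdd : d = g * d' := (Nat.mul_div_cancel' hgd).symm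
    have hco : Nat.Coprime c' d' := Nat.coprime_div_gcd_div_gcd hg0
    have hc'1 : 0 < c' := by
      rcases Nat.eq_zero_or_pos c' with h1 | h1
      · rw [h1, Nat.mul_zero] at hcc; omega
      · exact h1
    have hd'1 : 0 < d' := by
      rcases Nat.eq_zero_or_pos d' with h1 | h1
      · rw [h1, Nat.mul_zero] at hdd; omega
      · exact h1
    have hc'2 : 2 ≤ c' := by
      rcases Nat.lt_or_ge c' 2 with h1 | h1
      · exfalso
        have : c' = 1 := by omega
        rw [this, Nat.mul_one] at hcc
        exact hdc (hcc ▸ hgd)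
      · exact h1
    have hc'd' : c' < d' := by
      have : g * c' < g * d' := by omega
      exact lt_of_mul_lt_mul_left this (by omega)
    set π := c' + d' with hπdef
    have hπ5 : 5 ≤ π := by omega
    have hgπ : g * (π - 1) = c + d - g := by
      have e1 : g * π = c + d := by rw [hπdef, Nat.mul_add, ← hcc, ← hdd]
      have e2 : g * (π - 1) + g = g * π := by
        rw [← Nat.mul_succ]; congr 1; omega
      omega
    have hNge : g * (π - 1) ≤ N := by omega
    -- coprime c' π and inverse mod π
    have hcoπ : Nat.Coprime c' π := by
      have : Nat.gcd c' (d' + c') = Nat.gcd c' d' := Nat.gcd_add_self_right c' d'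
      rw [Nat.Coprime, hπdef, Nat.add_comm, this]
      exact hco
    haveI : NeZero π := ⟨by omega⟩
    -- uniform close steps at distance c and d
    have hclc : ∀ j, j + g * c' ≤ N → |b (j + g * c') - b j| ≤ L := by
      intro j hj
      rw [← hcc]
      rw [← hcc] at hj
      have := NumIff c j hc0 hj
      by_contra hh
      rw [not_le] at hh
      exact Fc (this.mp hh)
    have hcld : ∀ j, j + g * d' ≤ N → |b (j + g * d') - b j| ≤ L := by
      intro j hj
      rw [← hdd]
      rw [← hdd] at hj
      have := NumIff d j hd0 hj
      by_contra hh
      rw [not_le] at hh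
      exact Fd (this.mp hh)
    -- generic far fact producer
    have mkfar : ∀ x : ℕ, 0 < x → x < π → ¬ c ∣ g * x → g * x ≠ d →
        ∀ j, j + g * x ≤ N → (L : ℤ) < |b (j + g * x) - b j| := by
      intro x hx0 hxπ hxc hxd j hj
      have hgx0 : 0 < g * x := by positivity
      have hgxN : g * x ≤ N := by omega
      have hgxcd : g * x ≤ c + d - 1 := by
        have : g * x ≤ g * (π - 1) := Nat.mul_le_mul_left g (by omega)
        omega
      exact (NumIff (g * x) j hgx0 hj).mpr (FarAll (g * x) hgx0 hgxN hgxcd hxc hxd)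
    -- existence of lag w for a chosen residue x
    have mkw : ∀ x : ℕ, x < π → ∃ w, (w * c') % π = x := by
      intro x hx
      set u := ZMod.unitOfCoprime c' hcoπ with hu
      refine ⟨(((x : ZMod π)) * ↑u⁻¹).val, ?_⟩
      have e1 : ((((((x : ZMod π)) * ↑u⁻¹).val * c' : ℕ)) : ZMod π) = (x : ZMod π) := by
        push_cast
        rw [ZMod.natCast_val, ZMod.cast_id]
        have hcu : (c' : ZMod π) = (u : ZMod π) := (ZMod.coe_unitOfCoprime c' hcoπ).symm
        rw [hcu, mul_assoc, Units.inv_mul, mul_one]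
      have e2 := congrArg ZMod.val e1
      rw [ZMod.val_natCast, ZMod.val_natCast, Nat.mod_eq_of_lt hx] at e2
      exact e2
    -- case split on c'
    rcases eq_or_lt_of_le hc'2 with hc'eq | hc'3
    · -- c' = 2 : d' odd
      have hc2g : c = 2 * g := by rw [hcc, ← hc'eq]; ring
      have hd'odd : d' % 2 = 1 := by
        rcases Nat.mod_two_eq_zero_or_one d' with h3 | h3
        · exfalso
          have hdvd : c' ∣ d' := by
            rw [← hc'eq]
            exact Nat.dvd_of_mod_eq_zero h3
          have h4 := Nat.gcd_eq_left hdvd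
          have h5 : Nat.gcd c' d' = 1 := hco
          omega
        · exact h3
      have hd'3 : 3 ≤ d' := by omega
      by_cases hclq : ∀ k, 1 ≤ k → 2 * k ≤ d' + 1 → |b (g * (2 * k)) - b 0| ≤ (L : ℤ)
      · -- clique case : four-point bridge squeeze
        have e1 : g * (d' + 1) = g + g * d' := by ring
        have e2 : g * (d' - 1) + g = g * d' := by
          rw [← Nat.mul_succ]; congr 1; omega
        have hidx : g * (d' + 1) ≤ N := by
          have h6 : d' + 1 ≤ π - 1 := by omega
          have h7 := Nat.mul_le_mul_left g h6
          omega
        have B1 : ¬ ((L : ℤ) < |b (g * d') - b 0|) := by rw [← hdd]; exact Fd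
        have B2 : ¬ ((L : ℤ) < |b (g * (d' + 1)) - b g|) := by
          have hnum := NumIff d g hd0 (by rw [hdd]; omega)
          rw [show g + d = g * (d' + 1) by rw [hdd, e1]] at hnum
          exact fun hh => Fd (hnum.mp hh)
        have B3 : ¬ ((L : ℤ) < |b (g * d') - b g|) := by
          have hk := hclq ((d' - 1) / 2) (by omega) (by omega)
          rw [show 2 * ((d' - 1) / 2) = d' - 1 by omega] at hk
          have hnum := NumIff (g * (d' - 1)) g (Nat.mul_pos hg0 (by omega)) (by omega)
          rw [show g + g * (d' - 1) = g * d' by omega] at hnum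
          exact fun hh => absurd hk (not_le.mpr (hnum.mp hh))
        have B4 : ¬ ((L : ℤ) < |b (g * (d' + 1)) - b 0|) := by
          have hk := hclq ((d' + 1) / 2) (by omega) (by omega)
          rw [show 2 * ((d' + 1) / 2) = d' + 1 by omega] at hk
          exact fun hh => absurd hk (not_le.mpr hh)
        have B5 : (L : ℤ) < |b g - b 0| := Fmin g hg0 (by omega)
        have e3 : g * d' + g = g * (d' + 1) := by rw [← Nat.mul_succ]
        have B6 : (L : ℤ) < |b (g * (d' + 1)) - b (g * d')| := by
          have hnum := NumIff g (g * d') hg0 (by omega)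
          rw [show g * d' + g = g * (d' + 1) from e3] at hnum
          exact hnum.mpr (Fmin g hg0 (by omega))
        rw [not_lt, abs_le] at B1 B2 B3 B4
        rw [lt_abs] at B5 B6
        omega
      · -- non-clique : some even multiple is far
        push_neg at hclq
        obtain ⟨k, hk1, hkd, hkfar⟩ := hclq
        have hk2 : 2 ≤ k := by
          rcases Nat.lt_or_ge k 2 with h1 | h1
          · exfalso
            have hkk : k = 1 := by omega
            rw [hkk, show g * (2 * 1) = c by rw [hc2g]; ring] at hkfar
            exact Fc hkfar
          · exact h1
        set x := π - 2 * k with hxdef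
        have hx0 : 0 < x := by omega
        have hxπ : x < π := by omega
        obtain ⟨w, hw⟩ := mkw x hxπ
        apply BDaux.lag_contra b (L : ℤ) g c' d' x w N hc'1 hd'1 hx0 hxπ hw hNge (by positivity)
            hclc hcld
        · -- far at distance g*x  (x odd, x ≠ d')
          apply mkfar x hx0 hxπ
          · rw [hcc]
            intro hdvd
            have h2 : c' ∣ x := (mul_dvd_mul_iff_left (show g ≠ 0 by omega)).mp hdvd
            rw [← hc'eq] at h2
            obtain ⟨t, ht⟩ := h2
            omega
          · intro hxd
            rw [hdd] at hxd
            have h2 : x = d' := Nat.eq_of_mul_eq_mul_left hg0 hxd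
            omega
        · -- far at distance g*(π-x) = g*(2k)
          intro j hj
          rw [show π - x = 2 * k by omega] at hj ⊢
          exact (NumIff (g * (2 * k)) j (by positivity) hj).mpr hkfar
    · -- c' ≥ 3
      have hd'r : d' % c' ≠ 0 := by
        intro h0
        have hdvd : c' ∣ d' := Nat.dvd_of_mod_eq_zero h0
        have h4 := Nat.gcd_eq_left hdvd
        have h5 : Nat.gcd c' d' = 1 := hco
        omega
      have hd'rlt : d' % c' < c' := Nat.mod_lt _ (by omega)
      set x := if d' % c' = 1 then 2 else 1 with hxdef
      have hx0 : 0 < x := by rw [hxdef]; split <;> omega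
      have hxc' : x < c' := by rw [hxdef]; split <;> omega
      have hxne : x ≠ d' % c' := by
        rw [hxdef]; split
        · omega
        · omega
      have hxπ : x < π := by omega
      obtain ⟨w, hw⟩ := mkw x hxπ
      apply BDaux.lag_contra b (L : ℤ) g c' d' x w N hc'1 hd'1 hx0 hxπ hw hNge (by positivity)
          hclc hcld
      · -- far at g*x : since g*x < c
        intro j hj
        have h2 : g * x < c := by
          rw [hcc]
          exact (mul_lt_mul_iff_right₀ (show 0 < g by omega)).mpr hxc'
        exact (NumIff (g * x) j (by positivity) hj).mpr (Fmin (g * x) (by positivity) h2)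
      · -- far at g*(π-x)
        apply mkfar (π - x) (by omega) (by omega)
        · rw [hcc]
          intro hdvd
          have h2 : c' ∣ (π - x) := (mul_dvd_mul_iff_left (show g ≠ 0 by omega)).mp hdvd
          have h3 : c' ∣ (d' - x) := by
            have e : π - x = c' + (d' - x) := by omega
            rw [e] at h2
            exact (Nat.dvd_add_right dvd_rfl).mp h2
          obtain ⟨t, ht⟩ := h3
          have e4 : d' = c' * t + x := by omega
          have h5 : d' % c' = x := by
            rw [e4, Nat.mul_add_mod, Nat.mod_eq_of_lt hxc']
          exact hxne h5.symm
        · intro hxd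
          rw [hdd] at hxd
          have h2 : π - x = d' := Nat.eq_of_mul_eq_mul_left hg0 hxd
          omega
  -- conclusions
  have hg1 : 1 ≤ Nat.gcd c d := Nat.gcd_pos_of_pos_left _ hc0
  refine ⟨?_, ?_, ?_⟩
  · intro k hk0 hkM hkex
    by_contra hcon
    push_neg at hcon
    obtain ⟨hck, hkd⟩ := hcon
    obtain ⟨β, hβ, hβp⟩ := hkex
    rcases Nat.lt_or_ge k d with h1 | h1
    · exact hβp (hdmin k hk0 h1 hck β hβ)
    · have hkN : k ≤ N := by omega
      have hβr : β = r k := BDaux.titer_unique _ _ _ _ hβ (hr k hkN)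
      have hfar := FarAll k hk0 hkN (by omega) hck hkd
      rw [hβr, ← hr0] at hβp
      exact hβp ((PerpIff 0 k (by omega) hkN).mpr hfar)
  · rwa [Nat.add_comm c d] at hBound
  · intro β γ hβ hγ
    have hβr : β = r d := BDaux.titer_unique _ _ _ _ hβ (hr d hdN)
    have hγr : γ = r c := BDaux.titer_unique _ _ _ _ hγ (hr c hcN)
    rw [hβr, hγr]
    apply (PerpIff c d hcN hdN).mpr
    have hnum := NumIff (d - c) c (by omega) (by omega)
    rw [show c + (d - c) = d by omega] at hnum
    apply hnum.mpr
    apply Fdmin (d - c) (by omega) (by omega)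
    intro hdvd
    refine hdc ?_
    have e : d = (d - c) + c := by omega
    rw [e]
    exact Nat.dvd_add hdvd dvd_rfl
end

section
/- For any opposite-sign compatible T-quadruple (x,y) \in CTQ_o, the sizes differ: |x| \ne |y|. -/
open Matrix Kronecker

/-- A `T`-pair for a Belavin–Drinfeld triple: the data of a positive root `α` (with
`1 ≤ α.1 < α.2 ≤ n`) and `β = T^k α`.  If `pos = true` this encodes the positive
`T`-pair `(T^k α, -α)` (requiring `k > 0`); if `pos = false` it encodes the negative
`T`-pair `(-α, T^k α)` (allowing `k = 0`).  `Ord = k` and the size is `|α| = α.2 - α.1`. -/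
structure TPair (n : ℕ) (T : ℕ → ℕ) (Γ1 : Finset ℕ) where
  pos : Bool
  k : ℕ
  α : ℕ × ℕ
  β : ℕ × ℕ
  hα : α.1 < α.2
  hlo : 1 ≤ α.1 ∧ 1 ≤ β.1
  hhi : α.2 ≤ n ∧ β.2 ≤ n
  hiter : TIter T Γ1 k α β
  hpos : pos = true → 0 < k

open Fin.NatCast in
/-- The elementary matrix `e_{e_i - e_j} = e_{ij}` attached to a root `e_i - e_j`,
encoded as the pair `(i, j)` with `1 ≤ i, j ≤ n` (indices taken in `Fin (n+1)`). -/
noncomputable def Eroot (n : ℕ) (p : ℕ × ℕ) : Matrix (Fin (n + 1)) (Fin (n + 1)) ℂ :=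
  single (p.1 : Fin (n + 1)) (p.2 : Fin (n + 1)) 1

/-- The elementary tensor `E_x` attached to a `T`-pair `x`: for a positive pair
`(β, -α)` it is `e_β ⊗ e_{-α}`, and for a negative pair `(-α, β)` it is
`e_{-α} ⊗ e_β`, where `e_{-(e_i - e_j)} = e_{ji}`. -/
noncomputable def Epair {n : ℕ} {T : ℕ → ℕ} {Γ1 : Finset ℕ} (x : TPair n T Γ1) :
    Matrix (Fin (n + 1) × Fin (n + 1)) (Fin (n + 1) × Fin (n + 1)) ℂ :=
  if x.pos then Eroot n x.β ⊗ₖ Eroot n (x.α.2, x.α.1)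
  else Eroot n (x.α.2, x.α.1) ⊗ₖ Eroot n x.β

/-!
If `E_x E_y ≠ 0` for `T`-pairs of opposite signs, matching the inner indices of the two
products of elementary matrices forces `T^{k_x} α_x` and `α_y` to end at the same index and
`α_x`, `T^{k_y} α_y` to start at the same index. Since `T` preserves the length of roots,
`|x| = |y|` would give `T^{k_x} α_x = α_y` and `T^{k_y} α_y = α_x`, hence a cycle
`T^{k_x + k_y} α_x = α_x` with `k_x + k_y > 0`, which nilpotency of `T` forbids.
-/

namespace TIter

variable {T : ℕ → ℕ} {Γ1 : Finset ℕ}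

theorem trans {k m : ℕ} {α β γ : ℕ × ℕ} (h₁ : TIter T Γ1 k α β) (h₂ : TIter T Γ1 m β γ) :
    TIter T Γ1 (k + m) α γ := by
  induction k generalizing α with
  | zero => cases h₁; simpa using h₂
  | succ k ih =>
    obtain ⟨δ, hstep, hiter⟩ := h₁
    rw [Nat.add_right_comm]
    exact ⟨δ, hstep, ih hiter⟩

theorem mul_of_self {K : ℕ} {α : ℕ × ℕ} (h : TIter T Γ1 K α α) (m : ℕ) :
    TIter T Γ1 (m * K) α α := by
  induction m with
  | zero => rw [Nat.zero_mul]; rfl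
  | succ m ih => rw [Nat.succ_mul]; exact ih.trans h

theorem size_eq {k : ℕ} {α β : ℕ × ℕ} (hinj : Set.InjOn T Γ1) (h : TIter T Γ1 k α β) :
    β.2 - β.1 = α.2 - α.1 := by
  induction k generalizing α with
  | zero => cases h; rfl
  | succ k ih =>
    obtain ⟨γ, ⟨-, -, hsub, himage⟩, hiter⟩ := h
    have hcard := congrArg Finset.card himage
    rw [Finset.card_image_of_injOn (hinj.mono hsub), Nat.card_Ico, Nat.card_Ico] at hcard
    rw [ih hiter, hcard]

theorem iterate_mem {k j : ℕ} {α β : ℕ × ℕ} (h : TIter T Γ1 k α β) (hj : j < k) {i : ℕ}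
    (hi : i ∈ Finset.Ico α.1 α.2) : T^[j] i ∈ Γ1 := by
  induction k generalizing α j i with
  | zero => exact absurd hj j.not_lt_zero
  | succ k ih =>
    obtain ⟨γ, ⟨-, -, hsub, himage⟩, hiter⟩ := h
    cases j with
    | zero => exact hsub hi
    | succ j =>
      rw [Function.iterate_succ_apply]
      exact ih hiter (Nat.lt_of_succ_lt_succ hj) (himage ▸ Finset.mem_image_of_mem T hi)

theorem fst_lt_snd {k : ℕ} {α β : ℕ × ℕ} (h : TIter T Γ1 k α β) (hα : α.1 < α.2) :
    β.1 < β.2 := by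
  induction k generalizing α with
  | zero => cases h; exact hα
  | succ k ih =>
    obtain ⟨γ, ⟨-, hγ, -⟩, hiter⟩ := h
    exact ih hiter hγ

end TIter

/-- A cycle `T^K α = α` would keep `α.1` inside `Γ1` under all iterates of `T`, against
nilpotency. -/
theorem BDTriple.not_TIter_self {n : ℕ} {Γ1 Γ2 : Finset ℕ} {T : ℕ → ℕ}
    (h : BDTriple n Γ1 Γ2 T) {K : ℕ} (hK : 0 < K) {α : ℕ × ℕ} (hα : α.1 < α.2) :
    ¬ TIter T Γ1 K α α := by
  intro hcycle
  have hmem : α.1 ∈ Finset.Ico α.1 α.2 := Finset.mem_Ico.2 ⟨le_rfl, hα⟩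
  obtain ⟨k, -, hk⟩ := h.2.2.2.2 α.1 (hcycle.iterate_mem hK hmem)
  have hlt : k < (k + 1) * K := by nlinarith
  exact hk ((hcycle.mul_of_self (k + 1)).iterate_mem hlt hmem)

theorem Matrix.kronecker_single_mul_kronecker_single_ne_zero {ι R : Type*} [Fintype ι]
    [DecidableEq ι] [CommSemiring R] {a b c d a' b' c' d' : ι} {r s r' s' : R}
    (h : (single a b r ⊗ₖ single c d s) * (single a' b' r' ⊗ₖ single c' d' s') ≠ 0) :
    b = a' ∧ d = c' := by
  rw [← mul_kronecker_mul] at h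
  constructor
  · by_contra hne
    exact h (by rw [single_mul_single_of_ne (h := hne), zero_kronecker])
  · by_contra hne
    exact h (by rw [single_mul_single_of_ne (h := hne), kronecker_zero])

open Fin.NatCast in
theorem Fin.natCast_inj_of_le {n a b : ℕ} (ha : a ≤ n) (hb : b ≤ n) :
    (a : Fin (n + 1)) = b ↔ a = b := by
  rw [Fin.ext_iff, Fin.val_cast_of_lt (Nat.lt_succ_of_le ha),
    Fin.val_cast_of_lt (Nat.lt_succ_of_le hb)]

theorem TPair.β_fst_lt_snd {n : ℕ} {T : ℕ → ℕ} {Γ1 : Finset ℕ} (x : TPair n T Γ1) :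
    x.β.1 < x.β.2 :=
  x.hiter.fst_lt_snd x.hα

theorem TPair.endpoints_eq_of_Epair_mul_ne_zero {n : ℕ} {T : ℕ → ℕ} {Γ1 : Finset ℕ}
    {x y : TPair n T Γ1} (hsign : x.pos ≠ y.pos) (hE : Epair x * Epair y ≠ 0) :
    x.β.2 = y.α.2 ∧ x.α.1 = y.β.1 := by
  open Fin.NatCast in
  have hcast : (x.β.2 : Fin (n + 1)) = y.α.2 ∧ (x.α.1 : Fin (n + 1)) = y.β.1 := by
    unfold Epair Eroot at hE
    cases hx : x.pos <;> cases hy : y.pos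
    · exact absurd (hx.trans hy.symm) hsign
    · simp only [hx, hy, Bool.false_eq_true, if_true, if_false] at hE
      exact (Matrix.kronecker_single_mul_kronecker_single_ne_zero hE).symm
    · simp only [hx, hy, Bool.false_eq_true, if_true, if_false] at hE
      exact Matrix.kronecker_single_mul_kronecker_single_ne_zero hE
    · exact absurd (hx.trans hy.symm) hsign
  exact ⟨(Fin.natCast_inj_of_le x.hhi.2 y.hhi.1).1 hcast.1,
    (Fin.natCast_inj_of_le (by have := x.hα; have := x.hhi.1; omega)
      (by have := y.hhi.2; have := y.β_fst_lt_snd; omega)).1 hcast.2⟩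

theorem TPair.k_add_k_pos_of_pos_ne {n : ℕ} {T : ℕ → ℕ} {Γ1 : Finset ℕ} {x y : TPair n T Γ1}
    (hsign : x.pos ≠ y.pos) : 0 < x.k + y.k := by
  cases hx : x.pos
  · have := y.hpos (by simpa [hx] using hsign.symm); omega
  · have := x.hpos hx; omega

/-- For any opposite-sign compatible `T`-quadruple `(x, y)` (i.e. `T`-pairs of
opposite signs with `E_x E_y ≠ 0`), the sizes differ: `|x| ≠ |y|`. -/
theorem opposite_sign_sizes_differ (n : ℕ) (Γ1 Γ2 : Finset ℕ) (T : ℕ → ℕ)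
    (h : BDTriple n Γ1 Γ2 T) (x y : TPair n T Γ1) (hsign : x.pos ≠ y.pos)
    (hE : Epair x * Epair y ≠ 0) :
    x.α.2 - x.α.1 ≠ y.α.2 - y.α.1 := by
  intro hsize
  obtain ⟨hsnd, hfst⟩ := TPair.endpoints_eq_of_Epair_mul_ne_zero hsign hE
  have hinj : Set.InjOn T Γ1 := h.2.2.1.injOn
  have hxsize := x.hiter.size_eq hinj
  have hysize := y.hiter.size_eq hinj
  have hxy : x.β = y.α := Prod.ext (by have := x.hα; have := y.hα; omega) hsnd
  have hyx : y.β = x.α := Prod.ext hfst.symm (by have := x.hα; have := y.hα; omega)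
  exact h.not_TIter_self (TPair.k_add_k_pos_of_pos_ne hsign) x.hα
    ((hxy ▸ x.hiter).trans (hyx ▸ y.hiter))
end

section
/- For a fixed n, the number of Belavin-Drinfeld triples (T, \Gamma_1, \Gamma_2) of type A_{n-1} with |\Gamma_1| = |\Gamma| - 1 = n - 2 equals \phi(n), Euler's totient of n. Explicitly, these are exactly the triples with \Gamma_1 = \Gamma \setminus \{\alpha_{n-m}\}, \Gamma_2 = \Gamma \setminus \{\alpha_m\}, T(\alpha_i) = \alpha_{Res(i+m)}, for m \in \{1, \ldots, n-1\} with gcd(m,n) = 1. -/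
/-- The residue of `k` modulo `n` lying in `{1, …, n}`. -/
def Res (n k : ℕ) : ℕ := if k % n = 0 then n else k % n

lemma res_mod (n x : ℕ) (hn : 0 < n) : Res n x % n = x % n := by
  unfold Res; split
  · simp [Nat.mod_self, *]
  · simp [Nat.mod_mod_of_dvd, Nat.mod_mod]

lemma res_lt {n x : ℕ} (h1 : 0 < x) (h : x < n) : Res n x = x := by
  unfold Res
  rw [Nat.mod_eq_of_lt h, if_neg (by omega)]

lemma res_wrap {n x : ℕ} (h : n < x) (h2 : x < 2*n) : Res n x = x - n := by
  unfold Res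
  have h3 : x % n = x - n := by
    rw [Nat.mod_eq_sub_mod (by omega), Nat.mod_eq_of_lt (by omega)]
  rw [h3, if_neg (by omega)]

lemma res_congr {n x y : ℕ} (h : x % n = y % n) : Res n x = Res n y := by
  unfold Res; rw [h]

lemma res_range {n x : ℕ} (hn : 0 < n) : 1 ≤ Res n x ∧ Res n x ≤ n := by
  unfold Res; split
  · omega
  · have := Nat.mod_lt x hn; omega

lemma not_nilpotent_of_invariant {n : ℕ} {Γ1 Γ2 : Finset ℕ} {T : ℕ → ℕ}
    (H : BDTriple n Γ1 Γ2 T) (P : ℕ → Prop) (x : ℕ) (hx : P x)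
    (hmem : ∀ y, P y → y ∈ Γ1) (hstep : ∀ y, P y → P (T y)) : False := by
  obtain ⟨k, hk1, hk2⟩ := H.2.2.2.2 x (hmem x hx)
  have : ∀ j, P (T^[j] x) := by
    intro j
    induction j with
    | zero => simpa
    | succ j ih => rw [Function.iterate_succ_apply']; exact hstep _ ih
  exact hk2 (hmem _ (this k))

lemma affine_on_run {n : ℕ} {Γ1 Γ2 : Finset ℕ} {T : ℕ → ℕ}
    (H : BDTriple n Γ1 Γ2 T) (l r : ℕ)
    (hrun : ∀ i, l ≤ i → i < r → i ∈ Γ1) :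
    ∃ ε c : ℤ, (ε = 1 ∨ ε = -1) ∧ ∀ i, l ≤ i → i < r → (T i : ℤ) = ε * i + c := by
  obtain ⟨-, -, hbij, hadj, -⟩ := H
  induction r with
  | zero => exact ⟨1, 0, Or.inl rfl, by omega⟩
  | succ r ih =>
    rcases Nat.lt_or_ge r (l + 1) with hr | hr
    · exact ⟨1, (T l : ℤ) - l, Or.inl rfl, by
        intro i h1 h2
        have : i = l := by omega
        subst this; ring⟩
    rcases Nat.lt_or_ge r (l + 2) with hr2 | hr2
    · -- r = l + 1 : two points l, l+1
      have hl : l ∈ Γ1 := hrun l le_rfl (by omega)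
      have hl1 : l + 1 ∈ Γ1 := hrun (l+1) (by omega) (by omega)
      have : Adj (T l) (T (l+1)) := (hadj l hl (l+1) hl1).2 (Or.inl rfl)
      rcases this with h | h
      · exact ⟨1, (T l : ℤ) - l, Or.inl rfl, by
          intro i h1 h2
          have : i = l ∨ i = l + 1 := by omega
          rcases this with h3 | h3 <;> subst h3
          · ring
          · push_cast [← h]; ring⟩
      · exact ⟨-1, (T l : ℤ) + l, Or.inr rfl, by
          intro i h1 h2
          have : i = l ∨ i = l + 1 := by omega
          rcases this with h3 | h3 <;> subst h3
          · ring
          · have : (T (l+1) : ℤ) = T l - 1 := by push_cast [← h]; ring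
            rw [this]; push_cast; ring⟩
    · -- r ≥ l + 2, extend
      obtain ⟨ε, c, hε, hform⟩ := ih (fun i h1 h2 => hrun i h1 (by omega))
      refine ⟨ε, c, hε, ?_⟩
      intro i h1 h2
      rcases Nat.lt_or_ge i r with h3 | h3
      · exact hform i h1 h3
      have hi : i = r := by omega
      subst hi
      have h4 : i - 1 ∈ Γ1 := hrun _ (by omega) (by omega)
      have h5 : i ∈ Γ1 := hrun _ (by omega) (by omega)
      have h6 : i - 2 ∈ Γ1 := hrun _ (by omega) (by omega)
      have hAdj : Adj (T (i-1)) (T i) := (hadj _ h4 _ h5).2 (by unfold Adj; omega)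
      have e1 : (T (i-1) : ℤ) = ε * (i - 1) + c := by
        have := hform (i-1) (by omega) (by omega)
        push_cast [Nat.cast_sub (by omega : 1 ≤ i)] at this ⊢
        omega
      have e2 : (T (i-2) : ℤ) = ε * (i - 2) + c := by
        have := hform (i-2) (by omega) (by omega)
        push_cast [Nat.cast_sub (by omega : 2 ≤ i)] at this ⊢
        omega
      have hne : T i ≠ T (i - 2) := by
        intro hcontra
        have : i = i - 2 := hbij.2.1 (by exact_mod_cast hrun _ (by omega) (by omega) : (i:ℕ) ∈ (↑Γ1 : Set ℕ)) (hrun _ (by omega) (by omega)) hcontra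
        omega
      have hne' : (T i : ℤ) ≠ (T (i-2) : ℤ) := by exact_mod_cast hne
      rcases hAdj with h | h
      · -- T(i-1) + 1 = T i
        have : (T i : ℤ) = ε * (i-1) + c + 1 := by omega
        rcases hε with h9 | h9 <;> subst h9
        · rw [this]; ring
        · exfalso; apply hne'; rw [this, e2]; ring
      · -- T i + 1 = T (i-1)
        have : (T i : ℤ) = ε * (i-1) + c - 1 := by omega
        rcases hε with h9 | h9 <;> subst h9
        · exfalso; apply hne'; rw [this, e2]; ring
        · rw [this]; ring

lemma image_run {T : ℕ → ℕ} {l r : ℕ} {ε c : ℤ} (hε : ε = 1 ∨ ε = -1)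
    (hlr : l < r) (hform : ∀ i, l ≤ i → i < r → (T i : ℤ) = ε * i + c)
    (hpos : ∀ i, l ≤ i → i < r → 1 ≤ T i) :
    ∃ p, 1 ≤ p ∧ Finset.image T (Finset.Ico l r) = Finset.Ico p (p + (r - l)) := by
  rcases hε with h | h <;> subst h
  · refine ⟨T l, hpos l le_rfl hlr, ?_⟩
    ext x
    simp only [Finset.mem_image, Finset.mem_Ico]
    constructor
    · rintro ⟨i, ⟨h1, h2⟩, rfl⟩
      have e1 := hform i h1 h2
      have e2 := hform l le_rfl hlr
      omega
    · rintro ⟨h1, h2⟩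
      have hTl := hform l le_rfl hlr
      refine ⟨l + (x - T l), ⟨by omega, by omega⟩, ?_⟩
      have := hform (l + (x - T l)) (by omega) (by omega)
      omega
  · refine ⟨T (r-1), hpos (r-1) (by omega) (by omega), ?_⟩
    ext x
    simp only [Finset.mem_image, Finset.mem_Ico]
    constructor
    · rintro ⟨i, ⟨h1, h2⟩, rfl⟩
      have e1 := hform i h1 h2
      have e2 := hform (r-1) (by omega) (by omega)
      omega
    · rintro ⟨h1, h2⟩
      have hTr := hform (r-1) (by omega) (by omega)
      refine ⟨(r - 1) - (x - T (r-1)), ⟨by omega, by omega⟩, ?_⟩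
      have := hform ((r - 1) - (x - T (r-1))) (by omega) (by omega)
      omega

lemma interval_match {n b p₁ s₁ p₂ s₂ : ℕ} (hn : 3 ≤ n) (hb : 1 ≤ b ∧ b < n)
    (hp₁ : 1 ≤ p₁) (hp₂ : 1 ≤ p₂)
    (hs : s₁ + s₂ = n - 2)
    (hU : ∀ x, (1 ≤ x ∧ x < n ∧ x ≠ b) ↔ ((p₁ ≤ x ∧ x < p₁ + s₁) ∨ (p₂ ≤ x ∧ x < p₂ + s₂)))
    (hdis : ∀ x, ¬((p₁ ≤ x ∧ x < p₁ + s₁) ∧ (p₂ ≤ x ∧ x < p₂ + s₂)))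
    (hA : ∀ x y, (p₁ ≤ x ∧ x < p₁ + s₁) → (p₂ ≤ y ∧ y < p₂ + s₂) → x + 1 ≠ y ∧ y + 1 ≠ x) :
    (s₁ = b - 1 ∧ s₂ = n - 1 - b ∧ (s₁ = 0 ∨ p₁ = 1) ∧ (s₂ = 0 ∨ p₂ = b + 1)) ∨
    (s₁ = n - 1 - b ∧ s₂ = b - 1 ∧ (s₁ = 0 ∨ p₁ = b + 1) ∧ (s₂ = 0 ∨ p₂ = 1)) := by
  have c1 : b = 1 ∨ (p₁ ≤ 1 ∧ 1 < p₁ + s₁) ∨ (p₂ ≤ 1 ∧ 1 < p₂ + s₂) := by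
    rcases eq_or_ne b 1 with h | h
    · exact Or.inl h
    · have := (hU 1).1 ⟨le_rfl, by omega, by omega⟩; omega
  have c2 : b = 1 ∨ (p₁ ≤ b-1 ∧ b-1 < p₁ + s₁) ∨ (p₂ ≤ b-1 ∧ b-1 < p₂ + s₂) := by
    rcases eq_or_ne b 1 with h | h
    · exact Or.inl h
    · have := (hU (b-1)).1 ⟨by omega, by omega, by omega⟩; omega
  have c3 : b = n-1 ∨ (p₁ ≤ b+1 ∧ b+1 < p₁ + s₁) ∨ (p₂ ≤ b+1 ∧ b+1 < p₂ + s₂) := by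
    rcases eq_or_ne b (n-1) with h | h
    · exact Or.inl h
    · have := (hU (b+1)).1 ⟨by omega, by omega, by omega⟩; omega
  have c4 : b = n-1 ∨ (p₁ ≤ n-1 ∧ n-1 < p₁ + s₁) ∨ (p₂ ≤ n-1 ∧ n-1 < p₂ + s₂) := by
    rcases eq_or_ne b (n-1) with h | h
    · exact Or.inl h
    · have := (hU (n-1)).1 ⟨by omega, by omega, by omega⟩; omega
  rcases Nat.eq_zero_or_pos s₁ with hs₁ | hs₁
  · -- I1 empty
    rcases Nat.eq_zero_or_pos s₂ with hs₂ | hs₂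
    · omega
    have w1 := (hU p₂).2 (Or.inr ⟨le_rfl, by omega⟩)
    have w2 := (hU (p₂+s₂-1)).2 (Or.inr ⟨by omega, by omega⟩)
    have w3 := (hU b).2
    omega
  rcases Nat.eq_zero_or_pos s₂ with hs₂ | hs₂
  · -- I2 empty
    have w1 := (hU p₁).2 (Or.inl ⟨le_rfl, by omega⟩)
    have w2 := (hU (p₁+s₁-1)).2 (Or.inl ⟨by omega, by omega⟩)
    have w3 := (hU b).2
    omega
  -- both nonempty
  have w1 := (hU p₁).2 (Or.inl ⟨le_rfl, by omega⟩)
  have w2 := (hU (p₁+s₁-1)).2 (Or.inl ⟨by omega, by omega⟩)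
  have w4 := (hU p₂).2 (Or.inr ⟨le_rfl, by omega⟩)
  have w5 := (hU (p₂+s₂-1)).2 (Or.inr ⟨by omega, by omega⟩)
  have w3 := (hU b).2
  have side1 : p₁ + s₁ ≤ b ∨ b + 1 ≤ p₁ := by omega
  have side2 : p₂ + s₂ ≤ b ∨ b + 1 ≤ p₂ := by omega
  have hbd1 : p₁ + s₁ ≤ n := by omega
  have hbd2 : p₂ + s₂ ≤ n := by omega
  have a1 : ¬(p₁ + s₁ = p₂) := by
    rintro h3
    exact (hA (p₁+s₁-1) p₂ ⟨by omega, by omega⟩ ⟨le_rfl, by omega⟩).1 (by omega)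
  have a2 : ¬(p₂ + s₂ = p₁) := by
    rintro h3
    exact (hA p₁ (p₂+s₂-1) ⟨le_rfl, by omega⟩ ⟨by omega, by omega⟩).2 (by omega)
  have d1 : p₁ + s₁ ≤ p₂ ∨ p₂ + s₂ ≤ p₁ := by
    have := hdis (max p₁ p₂)
    omega
  rcases side1 with side1 | side1 <;> rcases side2 with side2 | side2
  · -- both in left part [1, b)
    have hb1 : b = n - 1 := by omega
    rcases d1 with d1 | d1
    · have := (hU (p₁+s₁)).1 ⟨by omega, by omega, by omega⟩
      omega
    · have := (hU (p₂+s₂)).1 ⟨by omega, by omega, by omega⟩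
      omega
  · left; omega
  · right; omega
  · -- both in right part (b, n)
    have hb1 : b = 1 := by omega
    rcases d1 with d1 | d1
    · have := (hU (p₁+s₁)).1 ⟨by omega, by omega, by omega⟩
      omega
    · have := (hU (p₂+s₂)).1 ⟨by omega, by omega, by omega⟩
      omega


open Finset in
lemma forward_struct {n : ℕ} {Γ1 Γ2 : Finset ℕ} {T : ℕ → ℕ}
    (hn : 2 ≤ n) (H : BDTriple n Γ1 Γ2 T) (hcard : Γ1.card = n - 2) :
    ∃ a b : ℕ, 1 ≤ a ∧ a < n ∧ 1 ≤ b ∧ b < n ∧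
      Γ1 = Finset.Ico 1 n \ {a} ∧ Γ2 = Finset.Ico 1 n \ {b} ∧
      (b = a ∨
       (b = n - a ∧
        ((∀ i, 1 ≤ i → i < a → T i = i + b) ∨
          (3 ≤ a ∧ ∀ i, 1 ≤ i → i < a → T i = n - i)) ∧
        ((∀ i, a < i → i < n → T i = i - a) ∨
          (3 ≤ n - a ∧ ∀ i, a < i → i < n → T i = n - i)))) := by
  obtain ⟨hΓ1sub, hΓ2sub, hbij, hadj, hnilp⟩ := H
  -- find a
  have hcardIco : (Finset.Ico 1 n).card = n - 1 := by rw [Nat.card_Ico]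
  have hsd : (Finset.Ico 1 n \ Γ1).card = 1 := by
    rw [Finset.card_sdiff_of_subset hΓ1sub]; omega
  obtain ⟨a, ha⟩ := Finset.card_eq_one.1 hsd
  have hΓ1 : Γ1 = Finset.Ico 1 n \ {a} := by
    rw [← ha, Finset.sdiff_sdiff_eq_self hΓ1sub]
  have hamem : a ∈ Finset.Ico 1 n := by
    have : a ∈ Finset.Ico 1 n \ Γ1 := by rw [ha]; exact Finset.mem_singleton_self a
    exact (Finset.mem_sdiff.1 this).1
  rw [Finset.mem_Ico] at hamem
  -- Γ2 is the image of Γ1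
  have hΓ2img : Γ2 = Γ1.image T := by
    apply Finset.coe_injective
    rw [Finset.coe_image, hbij.image_eq]
  have hcard2 : Γ2.card = n - 2 := by
    rw [hΓ2img, Finset.card_image_of_injOn hbij.injOn, hcard]
  -- find b
  have hsd2 : (Finset.Ico 1 n \ Γ2).card = 1 := by
    rw [Finset.card_sdiff_of_subset hΓ2sub]; omega
  obtain ⟨b, hb⟩ := Finset.card_eq_one.1 hsd2
  have hΓ2 : Γ2 = Finset.Ico 1 n \ {b} := by
    rw [← hb, Finset.sdiff_sdiff_eq_self hΓ2sub]
  have hbmem : b ∈ Finset.Ico 1 n := by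
    have : b ∈ Finset.Ico 1 n \ Γ2 := by rw [hb]; exact Finset.mem_singleton_self b
    exact (Finset.mem_sdiff.1 this).1
  rw [Finset.mem_Ico] at hbmem
  refine ⟨a, b, hamem.1, hamem.2, hbmem.1, hbmem.2, hΓ1, hΓ2, ?_⟩
  rcases Nat.lt_or_ge n 3 with hn2 | hn3
  · exact Or.inl (by omega)
  -- membership criteria
  have hmem1 : ∀ i, i ∈ Γ1 ↔ (1 ≤ i ∧ i < n ∧ i ≠ a) := by
    intro i; rw [hΓ1]; simp [Finset.mem_sdiff, Finset.mem_Ico]; tauto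
  have hpos : ∀ i ∈ Γ1, 1 ≤ T i := by
    intro i hi
    have : T i ∈ Γ2 := by
      have := hbij.mapsTo (by exact_mod_cast hi : (i:ℕ) ∈ (↑Γ1 : Set ℕ))
      exact_mod_cast this
    rw [hΓ2] at this
    simp only [Finset.mem_sdiff, Finset.mem_Ico] at this
    omega
  -- affine structure on the two runs
  have hrun1 : ∀ i, 1 ≤ i → i < a → i ∈ Γ1 := by
    intro i h1 h2; rw [hmem1]; omega
  have hrun2 : ∀ i, a + 1 ≤ i → i < n → i ∈ Γ1 := by
    intro i h1 h2; rw [hmem1]; omega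
  obtain ⟨ε₁, c₁, hε₁, hform₁⟩ := affine_on_run ⟨hΓ1sub, hΓ2sub, hbij, hadj, hnilp⟩ 1 a hrun1
  obtain ⟨ε₂, c₂, hε₂, hform₂⟩ := affine_on_run ⟨hΓ1sub, hΓ2sub, hbij, hadj, hnilp⟩ (a+1) n hrun2
  -- images of the runs
  have him1 : ∃ p, 1 ≤ p ∧ Finset.image T (Finset.Ico 1 a) = Finset.Ico p (p + (a - 1)) := by
    rcases Nat.lt_or_ge 1 a with h | h
    · exact image_run hε₁ h hform₁ (fun i h1 h2 => hpos i (hrun1 i h1 h2))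
    · refine ⟨1, le_rfl, ?_⟩
      have : a = 1 := by omega
      subst this
      simp
  have him2 : ∃ p, 1 ≤ p ∧ Finset.image T (Finset.Ico (a+1) n) = Finset.Ico p (p + (n - 1 - a)) := by
    rcases Nat.lt_or_ge (a+1) n with h | h
    · have := image_run hε₂ h hform₂ (fun i h1 h2 => hpos i (hrun2 i h1 h2))
      obtain ⟨p, hp, him⟩ := this
      exact ⟨p, hp, by rw [him]; congr 1; omega⟩
    · refine ⟨1, le_rfl, ?_⟩
      have h2 : n - 1 - a = 0 := by omega
      rw [h2, Finset.Ico_eq_empty (by omega), Finset.Ico_eq_empty (by omega)]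
      simp
  obtain ⟨p₁, hp₁, him1⟩ := him1
  obtain ⟨p₂, hp₂, him2⟩ := him2
  -- split of Γ1
  have hsplit : Γ1 = Finset.Ico 1 a ∪ Finset.Ico (a+1) n := by
    rw [hΓ1]; ext x
    simp only [Finset.mem_sdiff, Finset.mem_Ico, Finset.mem_union, Finset.mem_singleton]
    omega
  have himgsplit : Finset.Ico 1 n \ {b} =
      Finset.Ico p₁ (p₁ + (a-1)) ∪ Finset.Ico p₂ (p₂ + (n-1-a)) := by
    rw [← him1, ← him2, ← Finset.image_union, ← hsplit, ← hΓ2img, hΓ2]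
  have hU : ∀ x, (1 ≤ x ∧ x < n ∧ x ≠ b) ↔
      ((p₁ ≤ x ∧ x < p₁ + (a-1)) ∨ (p₂ ≤ x ∧ x < p₂ + (n-1-a))) := by
    intro x
    have := Finset.ext_iff.1 himgsplit x
    simp only [Finset.mem_sdiff, Finset.mem_Ico, Finset.mem_union, Finset.mem_singleton] at this
    omega
  have hdis : ∀ x, ¬((p₁ ≤ x ∧ x < p₁ + (a-1)) ∧ (p₂ ≤ x ∧ x < p₂ + (n-1-a))) := by
    rintro x ⟨hx1, hx2⟩
    rw [← Finset.mem_Ico, ← him1] at hx1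
    rw [← Finset.mem_Ico, ← him2] at hx2
    obtain ⟨u, hu, hu2⟩ := Finset.mem_image.1 hx1
    obtain ⟨v, hv, hv2⟩ := Finset.mem_image.1 hx2
    rw [Finset.mem_Ico] at hu hv
    have : u = v := hbij.injOn
      (by exact_mod_cast hrun1 u hu.1 hu.2) (by exact_mod_cast hrun2 v hv.1 hv.2) (by rw [hu2, hv2])
    omega
  have hA : ∀ x y, (p₁ ≤ x ∧ x < p₁ + (a-1)) → (p₂ ≤ y ∧ y < p₂ + (n-1-a)) →
      x + 1 ≠ y ∧ y + 1 ≠ x := by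
    intro x y hx hy
    rw [← Finset.mem_Ico, ← him1] at hx
    rw [← Finset.mem_Ico, ← him2] at hy
    obtain ⟨u, hu, hu2⟩ := Finset.mem_image.1 hx
    obtain ⟨v, hv, hv2⟩ := Finset.mem_image.1 hy
    rw [Finset.mem_Ico] at hu hv
    have hnadj : ¬ Adj (T u) (T v) := by
      rw [hadj u (hrun1 u hu.1 hu.2) v (hrun2 v hv.1 hv.2)]
      unfold Adj; omega
    unfold Adj at hnadj
    rw [hu2, hv2] at hnadj
    omega
  have hG := interval_match hn3 ⟨hbmem.1, hbmem.2⟩ hp₁ hp₂ (by omega) hU hdis hA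
  rcases hG with ⟨g1, g2, g3, g4⟩ | ⟨g1, g2, g3, g4⟩
  · left; omega
  right
  have hba : b = n - a := by omega
  refine ⟨hba, ?_, ?_⟩
  · -- orientation on C1
    rcases Nat.lt_or_ge a 2 with h | h
    · left; intro i h1 h2; omega
    have hp₁b : p₁ = b + 1 := by omega
    have hT1 : T 1 ∈ Finset.Ico p₁ (p₁ + (a-1)) := by
      rw [← him1]; exact Finset.mem_image_of_mem T (by rw [Finset.mem_Ico]; omega)
    have hTa : T (a-1) ∈ Finset.Ico p₁ (p₁ + (a-1)) := by
      rw [← him1]; exact Finset.mem_image_of_mem T (by rw [Finset.mem_Ico]; omega)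
    rw [Finset.mem_Ico] at hT1 hTa
    have e1 := hform₁ 1 le_rfl (by omega)
    have e2 := hform₁ (a-1) (by omega) (by omega)
    rcases hε₁ with hε | hε <;> subst hε
    · -- shift
      have hc : c₁ = b := by
        push_cast at e1 e2; omega
      left; intro i h1 h2
      have := hform₁ i h1 h2
      rw [hc] at this
      push_cast at this; omega
    · -- reversal: c₁ = n
      have hc : c₁ = n := by
        push_cast at e1 e2; omega
      rcases Nat.lt_or_ge a 3 with h3 | h3
      · left; intro i h1 h2
        have := hform₁ i h1 h2
        rw [hc] at this
        push_cast at this; omega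
      · right; refine ⟨h3, ?_⟩
        intro i h1 h2
        have := hform₁ i h1 h2
        rw [hc] at this
        push_cast at this; omega
  · -- orientation on C2
    rcases Nat.lt_or_ge (n - a) 2 with h | h
    · left; intro i h1 h2; omega
    have hp₂b : p₂ = 1 := by omega
    have hT1 : T (a+1) ∈ Finset.Ico p₂ (p₂ + (n-1-a)) := by
      rw [← him2]; exact Finset.mem_image_of_mem T (by rw [Finset.mem_Ico]; omega)
    have hTa : T (n-1) ∈ Finset.Ico p₂ (p₂ + (n-1-a)) := by
      rw [← him2]; exact Finset.mem_image_of_mem T (by rw [Finset.mem_Ico]; omega)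
    rw [Finset.mem_Ico] at hT1 hTa
    have e1 := hform₂ (a+1) le_rfl (by omega)
    have e2 := hform₂ (n-1) (by omega) (by omega)
    rcases hε₂ with hε | hε <;> subst hε
    · -- shift : c₂ = -a
      have hc : c₂ = -(a:ℤ) := by
        push_cast at e1 e2; omega
      left; intro i h1 h2
      have := hform₂ i h1 h2
      rw [hc] at this
      push_cast at this; omega
    · -- reversal : c₂ = n
      have hc : c₂ = n := by
        push_cast at e1 e2; omega
      rcases Nat.lt_or_ge (n-a) 3 with h3 | h3
      · left; intro i h1 h2
        have := hform₂ i h1 h2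
        rw [hc] at this
        push_cast at this; omega
      · right; refine ⟨h3, ?_⟩
        intro i h1 h2
        have := hform₂ i h1 h2
        rw [hc] at this
        push_cast at this; omega


lemma int_sub_self_emod (x q : ℤ) : (x - q) % q = x % q := by
  rw [show x - q = x + q * (-1) by ring, Int.add_mul_emod_self_left]

lemma int_sub_mod_eq (x y q : ℤ) (h : (x:ℤ) % q = y % q) : (x - y) % q = 0 := by
  have : (x - y) % q = (x % q - y % q) % q := (Int.sub_emod x y q)
  rw [this, h]; simp

open Finset in
lemma forward_main {n : ℕ} {Γ1 Γ2 : Finset ℕ} {T : ℕ → ℕ}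
    (hn : 2 ≤ n) (H : BDTriple n Γ1 Γ2 T) (hcard : Γ1.card = n - 2) :
    ∃ m : ℕ, 1 ≤ m ∧ m < n ∧ Nat.Coprime m n ∧
      Γ1 = Finset.Ico 1 n \ {n - m} ∧ Γ2 = Finset.Ico 1 n \ {m} ∧
      (∀ i ∈ Γ1, T i = Res n (i + m)) := by
  obtain ⟨a, b, ha1, ha2, hb1, hb2, hΓ1, hΓ2, hcases⟩ := forward_struct hn H hcard
  have hmem1 : ∀ i, i ∈ Γ1 ↔ (1 ≤ i ∧ i < n ∧ i ≠ a) := by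
    intro i; rw [hΓ1]; simp only [Finset.mem_sdiff, Finset.mem_Ico, Finset.mem_singleton]; tauto
  -- a helper to choose the residue r
  have key : ∀ q : ℕ, 3 ≤ q → ∃ r : ℕ, 1 ≤ r ∧ r ≤ 2 ∧ ¬((r:ℤ) % q = (n:ℤ) % q) := by
    intro q hq
    by_cases h : (1:ℤ) % q = (n:ℤ) % q
    · refine ⟨2, by omega, le_rfl, fun h2 => ?_⟩
      have h2' : ((2:ℤ)) % q = (1:ℤ) % q := by push_cast at h2; rw [h2, ← h]
      have h3 : ((2:ℤ) - 1) % q = 0 := int_sub_mod_eq _ _ _ h2'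
      norm_num at h3
      have := Int.le_of_dvd one_pos h3
      omega
    · refine ⟨1, le_rfl, by omega, ?_⟩
      simpa using h
  rcases hcases with hba | ⟨hba, hC1, hC2⟩
  · -- b = a : Γ2 = Γ1, contradiction unless Γ1 empty (n = 2)
    rcases Nat.lt_or_ge n 3 with hn2 | hn3
    · -- n = 2
      have hnn : n = 2 := by omega
      refine ⟨1, le_rfl, by omega, by simp [hnn], by rw [hΓ1, show a = n - 1 from by omega],
        by rw [hΓ2, show b = 1 from by omega], ?_⟩
      intro i hi
      rw [hmem1] at hi
      omega
    · exfalso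
      have hne : Γ1.Nonempty := Finset.card_pos.1 (by omega)
      obtain ⟨x, hx⟩ := hne
      refine not_nilpotent_of_invariant H (fun y => y ∈ Γ1) x hx (fun y hy => hy) ?_
      intro y hy
      have hTy : T y ∈ Γ2 := by
        have := H.2.2.1.mapsTo (by exact_mod_cast hy : (y:ℕ) ∈ (↑Γ1 : Set ℕ))
        exact_mod_cast this
      have : Γ2 = Γ1 := by rw [hΓ1, hΓ2, hba]
      rwa [this] at hTy
  · -- b = n - a
    have hab : a = n - b := by omega
    rcases hC1 with hD1 | ⟨ha3, hR1⟩
    · rcases hC2 with hD2 | ⟨hb3, hR2⟩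
      · -- shift on both components
        have hT : ∀ i ∈ Γ1, T i = Res n (i + b) := by
          intro i hi
          rw [hmem1] at hi
          rcases Nat.lt_or_ge i a with h | h
          · rw [hD1 i hi.1 h, res_lt (by omega) (by omega)]
          · have h' : a < i := by omega
            rw [hD2 i h' hi.2.1, res_wrap (by omega) (by omega)]
            omega
        -- coprimality
        have hcop : Nat.Coprime b n := by
          by_contra hcop
          set d := Nat.gcd b n with hd
          have hdb : d ∣ b := Nat.gcd_dvd_left b n
          have hdn : d ∣ n := Nat.gcd_dvd_right b n
          have hd2 : 2 ≤ d := by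
            have hdpos : 0 < d := Nat.gcd_pos_of_pos_left n (by omega)
            have hd1 : d ≠ 1 := fun h => hcop h
            omega
          have hdnb : d ∣ n - b := Nat.dvd_sub hdn hdb
          refine not_nilpotent_of_invariant H
            (fun y => (1 ≤ y ∧ y < n ∧ y ≠ a) ∧ ¬ d ∣ y) 1 ?_ ?_ ?_
          · refine ⟨⟨le_rfl, by omega, ?_⟩, ?_⟩
            · intro h1
              rw [hab] at h1
              have : d ∣ 1 := h1 ▸ hdnb
              have := Nat.le_of_dvd one_pos this
              omega
            · intro h1; have := Nat.le_of_dvd one_pos h1; omega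
          · intro y hy; rw [hmem1]; exact hy.1
          · rintro y ⟨hy1, hy2⟩
            rw [hT y ((hmem1 y).2 hy1)]
            set z := Res n (y + b) with hz
            have hzr : z % n = (y + b) % n := res_mod n (y+b) (by omega)
            have hzrange := res_range (x := y + b) (n := n) (by omega)
            have hznd : ¬ d ∣ z := by
              intro hdz
              apply hy2
              have h1 : (y + b) % d = z % d := by
                conv_lhs => rw [← Nat.mod_mod_of_dvd (y+b) hdn]
                conv_rhs => rw [← Nat.mod_mod_of_dvd z hdn]
                rw [hzr]
              have h2 : z % d = 0 := Nat.mod_eq_zero_of_dvd hdz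

              have h3 : d ∣ y + b := Nat.dvd_of_mod_eq_zero (by omega)
              have h4 := Nat.dvd_sub h3 hdb
              simpa using h4
            have hzn : z ≠ n := fun h => hznd (h ▸ hdn)
            have hza : z ≠ a := fun h => hznd (h ▸ (hab ▸ hdnb))
            exact ⟨⟨by omega, by omega, hza⟩, hznd⟩
        exact ⟨b, hb1, hb2, hcop, by rw [hΓ1, hab], hΓ2, hT⟩
      · -- shift on C1, reversal on C2 : contradiction, modulus b
        exfalso
        have hb3' : 3 ≤ b := by omega
        obtain ⟨r, hr1, hr2, hrn⟩ := key b hb3'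
        have hrq : (r:ℤ) % b = r := Int.emod_eq_of_lt (by omega) (by exact_mod_cast (by omega : r < b))
        have hanb : ((a:ℕ):ℤ) = (n:ℤ) - b := by omega
        have hnr0 : ¬ ((n:ℤ) - r) % b = 0 := by
          intro h
          have h4 : (b:ℤ) ∣ ((n:ℤ) - r) := Int.dvd_of_emod_eq_zero h
          obtain ⟨k, hk⟩ := h4
          have : (n:ℤ) % b = (r:ℤ) % b := by
            rw [show (n:ℤ) = r + b*k by linarith, Int.add_mul_emod_self_left]
          exact hrn this.symm
        refine not_nilpotent_of_invariant H
          (fun y => (1 ≤ y ∧ y < n ∧ y ≠ a) ∧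
            ((y:ℤ) % b = (r:ℤ) % b ∨ (y:ℤ) % b = ((n:ℤ) - r) % b)) r ?_ ?_ ?_
        · refine ⟨⟨hr1, by omega, fun h => ?_⟩, Or.inl rfl⟩
          apply hrn
          rw [show ((r:ℕ):ℤ) = (n:ℤ) - (b:ℤ) from by rw [h]; exact hanb]
          exact int_sub_self_emod _ _
        · intro y hy; rw [hmem1]; exact hy.1
        · rintro y ⟨⟨h1, h2, h3⟩, hy4⟩
          rcases Nat.lt_or_ge y a with h | h
          · -- T y = y + b
            rw [hD1 y h1 h]
            have hcast : ((y + b : ℕ):ℤ) = (y:ℤ) + b := by push_cast; ring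
            have hzc : ((y + b : ℕ):ℤ) % b = (y:ℤ) % b := by
              rw [hcast, show (y:ℤ) + b = y + b * 1 by ring, Int.add_mul_emod_self_left]
            refine ⟨⟨by omega, by omega, fun hzeq => ?_⟩, by rw [hzc]; exact hy4⟩
            -- y + b = a impossible
            have : ((y:ℤ)) % b = ((n:ℤ)) % b := by
              have h5 : ((y + b : ℕ):ℤ) = (n:ℤ) - b := by rw [hzeq]; exact_mod_cast hanb
              have : (y:ℤ) % b = ((n:ℤ) - b) % b := by rw [← hzc, h5]
              rwa [int_sub_self_emod] at this
            rcases hy4 with h6 | h6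
            · exact hrn (by rw [← h6, this])
            · have h7 : ((n:ℤ) - ((n:ℤ) - r)) % b = 0 :=
                int_sub_mod_eq _ _ _ (this.symm.trans h6)
              rw [show (n:ℤ) - ((n:ℤ) - r) = (r:ℤ) by ring, hrq] at h7
              omega
          · -- T y = n - y
            have h' : a < y := by omega
            rw [hR2 y h' h2]
            have hcast : ((n - y : ℕ):ℤ) = (n:ℤ) - y := by push_cast [Nat.cast_sub (by omega : y ≤ n)]; ring
            have hflip : ∀ u v : ℤ, u % b = v % b → ((n:ℤ) - u) % b = ((n:ℤ) - v) % b := by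
              intro u v huv; exact Int.ModEq.sub (Int.ModEq.refl _) huv
            refine ⟨⟨by omega, by omega, fun hzeq => ?_⟩, ?_⟩
            · -- n - y = a, i.e. y = b : impossible
              have hyb : y = b := by omega
              have h0 : ((y:ℕ):ℤ) % b = 0 := by
                rw [show ((y:ℕ):ℤ) = ((b:ℕ):ℤ) from by exact_mod_cast hyb]
                simp
              rcases hy4 with h6 | h6
              · rw [h0] at h6; rw [hrq] at h6; omega
              · rw [h0] at h6; exact hnr0 h6.symm
            · rcases hy4 with h6 | h6
              · right
                rw [hcast]
                exact hflip _ _ h6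
              · left
                rw [hcast]
                have := hflip _ _ h6
                rwa [show (n:ℤ) - ((n:ℤ) - r) = (r:ℤ) by ring] at this
    · rcases hC2 with hD2 | ⟨hb3, hR2⟩
      · -- reversal on C1, shift on C2 : contradiction, modulus a
        exfalso
        obtain ⟨r, hr1, hr2, hrn⟩ := key a (by omega)
        have hrq : (r:ℤ) % a = r :=
          Int.emod_eq_of_lt (by omega) (by exact_mod_cast (by omega : r < a))
        have hnr0 : ¬ ((n:ℤ) - r) % a = 0 := by
          intro h
          obtain ⟨k, hk⟩ := Int.dvd_of_emod_eq_zero h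
          have : (n:ℤ) % a = (r:ℤ) % a := by
            rw [show (n:ℤ) = r + a*k by linarith, Int.add_mul_emod_self_left]
          exact hrn this.symm
        refine not_nilpotent_of_invariant H
          (fun y => (1 ≤ y ∧ y < n ∧ y ≠ a) ∧
            ((y:ℤ) % a = (r:ℤ) % a ∨ (y:ℤ) % a = ((n:ℤ) - r) % a)) r ?_ ?_ ?_
        · exact ⟨⟨hr1, by omega, by omega⟩, Or.inl rfl⟩
        · intro y hy; rw [hmem1]; exact hy.1
        · rintro y ⟨⟨h1, h2, h3⟩, hy4⟩
          rcases Nat.lt_or_ge y a with h | h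
          · -- T y = n - y
            rw [hR1 y h1 h]
            have hcast : ((n - y : ℕ):ℤ) = (n:ℤ) - y := by
              push_cast [Nat.cast_sub (by omega : y ≤ n)]; ring
            refine ⟨⟨by omega, by omega, fun hzeq => ?_⟩, ?_⟩
            · -- n - y = a ⇒ y ≡ n (mod a)
              have h0 : (y:ℤ) % a = (n:ℤ) % a := by
                rw [show ((y:ℕ):ℤ) = (n:ℤ) - a from by omega]
                exact int_sub_self_emod _ _
              rcases hy4 with h6 | h6
              · exact hrn (h6.symm.trans h0)
              · have h7 := int_sub_mod_eq _ _ _ (h0.symm.trans h6)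
                rw [show (n:ℤ) - ((n:ℤ) - r) = (r:ℤ) by ring, hrq] at h7
                omega
            · rcases hy4 with h6 | h6
              · right; rw [hcast]; exact Int.ModEq.sub (Int.ModEq.refl _) h6
              · left; rw [hcast]
                have := Int.ModEq.sub (Int.ModEq.refl (n:ℤ)) h6
                rwa [show (n:ℤ) - ((n:ℤ) - r) = (r:ℤ) by ring] at this
          · -- T y = y - a
            have h' : a < y := by omega
            rw [hD2 y h' h2]
            have hcast : ((y - a : ℕ):ℤ) = (y:ℤ) - a := by
              push_cast [Nat.cast_sub (by omega : a ≤ y)]; ring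
            have hzc : ((y - a:ℕ):ℤ) % a = (y:ℤ) % a := by
              rw [hcast]; exact int_sub_self_emod _ _
            refine ⟨⟨by omega, by omega, fun hzeq => ?_⟩, by rw [hzc]; exact hy4⟩
            have h0 : (y:ℤ) % a = 0 := by
              rw [show (y:ℤ) = (a:ℤ) * 2 from by omega]
              simp [Int.mul_emod_right]
            rcases hy4 with h6 | h6
            · rw [h0] at h6; rw [hrq] at h6; omega
            · rw [h0] at h6; exact hnr0 h6.symm
      · -- reversal on both components
        exfalso
        have hb3' : 3 ≤ b := by omega
        have hTnY : ∀ y, 1 ≤ y → y < n → y ≠ a → T y = n - y := by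
          intro y h1 h2 h3
          rcases Nat.lt_or_ge y a with h | h
          · exact hR1 y h1 h
          · exact hR2 y (by omega) h2
        refine not_nilpotent_of_invariant H
          (fun y => 1 ≤ y ∧ y < n ∧ y ≠ a ∧ y ≠ b) 1
          ⟨le_rfl, by omega, by omega, by omega⟩
          (fun y hy => (hmem1 y).2 ⟨hy.1, hy.2.1, hy.2.2.1⟩) ?_
        rintro y ⟨h1, h2, h3, h4⟩
        rw [hTnY y h1 h2 h3]
        exact ⟨by omega, by omega, by omega, by omega⟩

open Finset in
lemma backward_main {n m : ℕ} (hn : 2 ≤ n) (hm1 : 1 ≤ m) (hm2 : m < n)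
    (hcop : Nat.Coprime m n) :
    BDTriple n (Finset.Ico 1 n \ {n - m}) (Finset.Ico 1 n \ {m})
      (fun i => if i ∈ Finset.Ico 1 n \ ({n - m} : Finset ℕ) then Res n (i + m) else 0) := by
  set Γ1 : Finset ℕ := Finset.Ico 1 n \ {n - m} with hΓ1
  set Γ2 : Finset ℕ := Finset.Ico 1 n \ {m} with hΓ2
  set T : ℕ → ℕ := fun i => if i ∈ Finset.Ico 1 n \ ({n - m} : Finset ℕ) then Res n (i + m) else 0 with hT
  have hmem1 : ∀ i, i ∈ Γ1 ↔ (1 ≤ i ∧ i < n ∧ i ≠ n - m) := by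
    intro i; rw [hΓ1]
    simp only [Finset.mem_sdiff, Finset.mem_Ico, Finset.mem_singleton]; tauto
  have hmem2 : ∀ i, i ∈ Γ2 ↔ (1 ≤ i ∧ i < n ∧ i ≠ m) := by
    intro i; rw [hΓ2]
    simp only [Finset.mem_sdiff, Finset.mem_Ico, Finset.mem_singleton]; tauto
  have hval : ∀ i ∈ Γ1, (T i = i + m ∧ i + m < n) ∨ (T i = i + m - n ∧ n < i + m) := by
    intro i hi
    have hi' := (hmem1 i).1 hi
    have hTi : T i = Res n (i + m) := if_pos hi
    rcases Nat.lt_or_ge (i + m) n with h | h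
    · left; exact ⟨by rw [hTi, res_lt (by omega) h], h⟩
    · right
      have hne : i + m ≠ n := by omega
      refine ⟨by rw [hTi, res_wrap (by omega) (by omega)], by omega⟩
  have hmapsto : ∀ i ∈ Γ1, T i ∈ Γ2 := by
    intro i hi
    have hi' := (hmem1 i).1 hi
    rcases hval i hi with ⟨h1, h2⟩ | ⟨h1, h2⟩ <;> (rw [hmem2, h1]; omega)
  refine ⟨Finset.sdiff_subset, Finset.sdiff_subset, ⟨?_, ?_, ?_⟩, ?_, ?_⟩
  · -- MapsTo
    intro i hi
    have : i ∈ Γ1 := by exact_mod_cast hi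
    exact_mod_cast hmapsto i this
  · -- InjOn
    intro i hi j hj hij
    have hi' := (hmem1 i).1 (by exact_mod_cast hi)
    have hj' := (hmem1 j).1 (by exact_mod_cast hj)
    rcases hval i (by exact_mod_cast hi) with ⟨h1, h2⟩ | ⟨h1, h2⟩ <;>
      rcases hval j (by exact_mod_cast hj) with ⟨h3, h4⟩ | ⟨h3, h4⟩ <;>
      (rw [h1, h3] at hij; omega)
  · -- SurjOn
    intro j hj
    have hj' := (hmem2 j).1 (by exact_mod_cast hj)
    rcases Nat.lt_or_ge m j with h | h
    · refine ⟨j - m, ?_, ?_⟩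
      · have : j - m ∈ Γ1 := (hmem1 _).2 ⟨by omega, by omega, by omega⟩
        exact_mod_cast this
      · have hmem : j - m ∈ Γ1 := (hmem1 _).2 ⟨by omega, by omega, by omega⟩
        rcases hval _ hmem with ⟨h1, h2⟩ | ⟨h1, h2⟩ <;> (rw [h1]; omega)
    · refine ⟨j + n - m, ?_, ?_⟩
      · have : j + n - m ∈ Γ1 := (hmem1 _).2 ⟨by omega, by omega, by omega⟩
        exact_mod_cast this
      · have hmem : j + n - m ∈ Γ1 := (hmem1 _).2 ⟨by omega, by omega, by omega⟩
        rcases hval _ hmem with ⟨h1, h2⟩ | ⟨h1, h2⟩ <;> (rw [h1]; omega)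
  · -- adjacency
    intro i hi j hj
    have hi' := (hmem1 i).1 hi
    have hj' := (hmem1 j).1 hj
    unfold Adj
    rcases hval i hi with ⟨h1, h2⟩ | ⟨h1, h2⟩ <;>
      rcases hval j hj with ⟨h3, h4⟩ | ⟨h3, h4⟩ <;>
      (rw [h1, h3]; constructor <;> intro hcase <;> omega)
  · -- nilpotency
    intro i hi
    have hi' := (hmem1 i).1 hi
    haveI : NeZero n := ⟨by omega⟩
    -- find k₀ with i + k₀ * m ≡ n - m (mod n)
    have hunit : IsUnit (m : ZMod n) := by
      rw [ZMod.isUnit_iff_coprime]; exact hcop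
    set u : ZMod n := (((n - m : ℕ) : ZMod n) - (i : ZMod n)) * (m : ZMod n)⁻¹ with hu
    set k₀ : ℕ := u.val with hk₀
    have hcong : ((i + k₀ * m : ℕ) : ZMod n) = ((n - m : ℕ) : ZMod n) := by
      push_cast
      rw [hk₀, ZMod.natCast_val, ZMod.cast_id, hu, mul_assoc,
        ZMod.inv_mul_of_unit _ hunit, mul_one]
      ring
    have hmod : (i + k₀ * m) % n = (n - m) % n := by
      rwa [ZMod.natCast_eq_natCast_iff] at hcong
    have hknz : 1 ≤ k₀ := by
      rcases Nat.eq_zero_or_pos k₀ with h | h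
      · exfalso
        rw [h] at hmod
        simp only [Nat.zero_mul, Nat.add_zero] at hmod
        rw [Nat.mod_eq_of_lt (by omega), Nat.mod_eq_of_lt (by omega)] at hmod
        omega
      · omega
    have hQ : 1 ≤ k₀ ∧ Res n (i + k₀ * m) ∉ Γ1 := by
      refine ⟨hknz, ?_⟩
      have hres : Res n (i + k₀ * m) = n - m := by
        have h2 := res_range (x := i + k₀*m) (n := n) (by omega)
        have h1 : Res n (i + k₀*m) % n = n - m := by
          rw [res_mod _ _ (by omega), hmod, Nat.mod_eq_of_lt (by omega)]
        rcases Nat.eq_or_lt_of_le h2.2 with h3 | h3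
        · exfalso; rw [h3, Nat.mod_self] at h1; omega
        · rwa [Nat.mod_eq_of_lt h3] at h1
      rw [hres, hmem1]
      omega
    have hEx : ∃ k, 1 ≤ k ∧ Res n (i + k * m) ∉ Γ1 := ⟨k₀, hQ⟩
    set K := Nat.find hEx with hK
    have hKspec := Nat.find_spec hEx
    have hclaim : ∀ j, j ≤ K → T^[j] i = Res n (i + j * m) := by
      intro j
      induction j with
      | zero =>
        intro _
        simp only [Function.iterate_zero, id_eq, Nat.zero_mul, Nat.add_zero]
        rw [res_lt (by omega) (by omega)]
      | succ j ih =>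
        intro hj
        have hjK : j < K := by omega
        have hprev := ih (by omega)
        have hmemprev : Res n (i + j * m) ∈ Γ1 := by
          rcases Nat.eq_zero_or_pos j with h | h
          · rw [h]; simp only [Nat.zero_mul, Nat.add_zero]
            rw [res_lt (by omega) (by omega)]; exact hi
          · by_contra hcon
            exact Nat.find_min hEx hjK ⟨h, hcon⟩
        rw [Function.iterate_succ_apply', hprev]
        have : T (Res n (i + j * m)) = Res n (Res n (i + j * m) + m) := if_pos hmemprev
        rw [this]
        apply res_congr
        rw [Nat.add_mod, res_mod _ _ (by omega), ← Nat.add_mod]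
        congr 1
        ring
    exact ⟨K, hKspec.1, by rw [hclaim K le_rfl]; exact hKspec.2⟩

/-- The Belavin–Drinfeld triples of type `A_{n-1}` with `|Γ₁| = |Γ| - 1 = n - 2`
(normalizing `T` to be `0` off `Γ₁`) are exactly the generalized Cremmer–Gervais
triples `Γ₁ = Γ \ {α_{n-m}}`, `Γ₂ = Γ \ {α_m}`, `T(α_i) = α_{Res(i+m)}` for
`1 ≤ m < n` coprime to `n`; in particular there are exactly `φ(n)` of them. -/
theorem cremmerGervais_classification (n : ℕ) (hn : 2 ≤ n) :
    ({t : Finset ℕ × Finset ℕ × (ℕ → ℕ) |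
        BDTriple n t.1 t.2.1 t.2.2 ∧ t.1.card = n - 2 ∧ ∀ i ∉ t.1, t.2.2 i = 0} =
      {t : Finset ℕ × Finset ℕ × (ℕ → ℕ) |
        ∃ m, 1 ≤ m ∧ m < n ∧ Nat.Coprime m n ∧
          t.1 = Finset.Ico 1 n \ {n - m} ∧ t.2.1 = Finset.Ico 1 n \ {m} ∧
          t.2.2 = fun i => if i ∈ Finset.Ico 1 n \ ({n - m} : Finset ℕ)
            then Res n (i + m) else 0}) ∧
    {t : Finset ℕ × Finset ℕ × (ℕ → ℕ) |
        BDTriple n t.1 t.2.1 t.2.2 ∧ t.1.card = n - 2 ∧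
          ∀ i ∉ t.1, t.2.2 i = 0}.ncard = Nat.totient n := by
  have hseteq : ({t : Finset ℕ × Finset ℕ × (ℕ → ℕ) |
        BDTriple n t.1 t.2.1 t.2.2 ∧ t.1.card = n - 2 ∧ ∀ i ∉ t.1, t.2.2 i = 0} =
      {t : Finset ℕ × Finset ℕ × (ℕ → ℕ) |
        ∃ m, 1 ≤ m ∧ m < n ∧ Nat.Coprime m n ∧
          t.1 = Finset.Ico 1 n \ {n - m} ∧ t.2.1 = Finset.Ico 1 n \ {m} ∧
          t.2.2 = fun i => if i ∈ Finset.Ico 1 n \ ({n - m} : Finset ℕ)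
            then Res n (i + m) else 0}) := by
    ext t
    simp only [Set.mem_setOf_eq]
    constructor
    · rintro ⟨hBD, hcard, hT0⟩
      obtain ⟨m, hm1, hm2, hcop, h1, h2, h3⟩ := forward_main hn hBD hcard
      refine ⟨m, hm1, hm2, hcop, h1, h2, ?_⟩
      funext i
      by_cases hi : i ∈ Finset.Ico 1 n \ ({n - m} : Finset ℕ)
      · rw [if_pos hi]
        exact h3 i (h1 ▸ hi)
      · rw [if_neg hi]
        exact hT0 i (by rw [h1]; exact hi)
    · rintro ⟨m, hm1, hm2, hcop, h1, h2, h3⟩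
      refine ⟨?_, ?_, ?_⟩
      · rw [show t = (t.1, t.2.1, t.2.2) from rfl, h1, h2, h3]
        exact backward_main hn hm1 hm2 hcop
      · rw [h1, Finset.card_sdiff_of_subset (by
          intro x hx
          rw [Finset.mem_singleton] at hx
          rw [hx, Finset.mem_Ico]
          omega)]
        rw [Nat.card_Ico, Finset.card_singleton]
        omega
      · intro i hi
        rw [h3]
        exact if_neg (by rwa [← h1])
  refine ⟨hseteq, ?_⟩
  rw [hseteq]
  have himg : {t : Finset ℕ × Finset ℕ × (ℕ → ℕ) |
        ∃ m, 1 ≤ m ∧ m < n ∧ Nat.Coprime m n ∧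
          t.1 = Finset.Ico 1 n \ {n - m} ∧ t.2.1 = Finset.Ico 1 n \ {m} ∧
          t.2.2 = fun i => if i ∈ Finset.Ico 1 n \ ({n - m} : Finset ℕ)
            then Res n (i + m) else 0} =
      (fun m => ((Finset.Ico 1 n \ {n - m}, Finset.Ico 1 n \ {m},
        fun i => if i ∈ Finset.Ico 1 n \ ({n - m} : Finset ℕ) then Res n (i + m) else 0) :
          Finset ℕ × Finset ℕ × (ℕ → ℕ))) ''
        ↑((Finset.range n).filter (fun m => 1 ≤ m ∧ Nat.Coprime m n)) := by
    ext t
    simp only [Set.mem_setOf_eq, Set.mem_image, Finset.coe_filter, Finset.mem_range,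
      Set.mem_setOf_eq]
    constructor
    · rintro ⟨m, hm1, hm2, hcop, h1, h2, h3⟩
      refine ⟨m, ⟨hm2, hm1, hcop⟩, ?_⟩
      rw [show t = (t.1, t.2.1, t.2.2) from rfl, h1, h2, h3]
    · rintro ⟨m, ⟨hm2, hm1, hcop⟩, rfl⟩
      exact ⟨m, hm1, hm2, hcop, rfl, rfl, rfl⟩
  rw [himg, Set.ncard_image_of_injOn, Set.ncard_coe_finset]
  · -- card of the filter = totient
    rw [Nat.totient]
    congr 1
    apply Finset.filter_congr
    intro m hm
    rw [Finset.mem_range] at hm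
    constructor
    · rintro ⟨h1, h2⟩; exact h2.symm
    · intro h
      refine ⟨?_, Nat.Coprime.symm h⟩
      rcases Nat.eq_zero_or_pos m with h0 | h0
      · exfalso
        rw [h0] at h
        have := Nat.coprime_zero_right n |>.1 h
        omega
      · omega
  · -- injectivity
    intro m₁ hm₁ m₂ hm₂ heq
    simp only [Finset.coe_filter, Finset.mem_range, Set.mem_setOf_eq] at hm₁ hm₂
    have h2 : Finset.Ico 1 n \ {m₁} = Finset.Ico 1 n \ ({m₂} : Finset ℕ) :=
      congrArg (fun t => t.2.1) heq
    by_contra hne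
    have hmm : m₁ ∈ Finset.Ico 1 n \ ({m₂} : Finset ℕ) := by
      rw [Finset.mem_sdiff, Finset.mem_Ico, Finset.mem_singleton]
      exact ⟨⟨hm₁.2.1, hm₁.1⟩, hne⟩
    rw [← h2, Finset.mem_sdiff, Finset.mem_singleton] at hmm
    exact hmm.2 rfl
end

section
/- Let x \in Mat_n(\mathbb{C}(q)) \otimes Mat_n(\mathbb{C}(q)) and define x_{q^{-1}} by substituting q^{-1} for q, and x^T by transposing both tensor factors. Suppose R_1, R_2 satisfy R_1 - (R_2)^T_{q^{-1}} = (q - q^{-1}) P where P is the flip, and suppose P R_2^T_{q^{-1}} = (P R_1)^{-1}. Then R_2^T_{q^{-1}} = ((R_1)^{-1})^{21}, and R_1 satisfies the quantum Yang-Baxter equation if and only if R_2 does. -/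
/-!
Conjugation by the flip `P` is `x ↦ x²¹` and `P² = 1`, so `P (R₂)ᵀ_{q⁻¹} = (P R₁)⁻¹` says
`(R₂)ᵀ_{q⁻¹} = P R₁⁻¹ P = (R₁⁻¹)²¹`. The QYBE is preserved by inverting `R` (invert both sides),
by `x ↦ x²¹` (relabel the tensor factors `1 ↔ 3`), by transposing both factors (transpose both
sides) and by applying an injective ring map entrywise; chaining these gives the equivalence.
-/

set_option synthInstance.maxHeartbeats 1000000

open Matrix Kronecker

/-- `R ⊗ 1`, acting on factors 1 and 2 of a triple tensor product. -/
def lift12 {K : Type*} [Semiring K] {n : ℕ}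
    (R : Matrix (Fin n × Fin n) (Fin n × Fin n) K) :
    Matrix (Fin n × Fin n × Fin n) (Fin n × Fin n × Fin n) K :=
  Matrix.of fun p q => R (p.1, p.2.1) (q.1, q.2.1) * (if p.2.2 = q.2.2 then 1 else 0)

/-- `R` acting on factors 1 and 3 of a triple tensor product. -/
def lift13 {K : Type*} [Semiring K] {n : ℕ}
    (R : Matrix (Fin n × Fin n) (Fin n × Fin n) K) :
    Matrix (Fin n × Fin n × Fin n) (Fin n × Fin n × Fin n) K :=
  Matrix.of fun p q => R (p.1, p.2.2) (q.1, q.2.2) * (if p.2.1 = q.2.1 then 1 else 0)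

/-- `1 ⊗ R`, acting on factors 2 and 3 of a triple tensor product. -/
def lift23 {K : Type*} [Semiring K] {n : ℕ}
    (R : Matrix (Fin n × Fin n) (Fin n × Fin n) K) :
    Matrix (Fin n × Fin n × Fin n) (Fin n × Fin n × Fin n) K :=
  Matrix.of fun p q => (if p.1 = q.1 then 1 else 0) * R (p.2.1, p.2.2) (q.2.1, q.2.2)

/-- The quantum Yang–Baxter equation `R¹² R¹³ R²³ = R²³ R¹³ R¹²`. -/
def QYBE {K : Type*} [Semiring K] {n : ℕ}
    (R : Matrix (Fin n × Fin n) (Fin n × Fin n) K) : Prop :=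
  lift12 R * lift13 R * lift23 R = lift23 R * lift13 R * lift12 R

/-- The flip `x ↦ x²¹` of the two tensor factors. -/
def flip21 {K : Type*} {n : ℕ} (x : Matrix (Fin n × Fin n) (Fin n × Fin n) K) :
    Matrix (Fin n × Fin n) (Fin n × Fin n) K :=
  Matrix.of fun p q => x (p.2, p.1) (q.2, q.1)

/-- The flip operator `P = ∑_{i,j} e_{ij} ⊗ e_{ji}` over `ℂ(q)`. -/
noncomputable def Pflip (n : ℕ) : Matrix (Fin n × Fin n) (Fin n × Fin n) (RatFunc ℂ) :=
  ∑ i : Fin n, ∑ j : Fin n,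
    single i j (1 : RatFunc ℂ) ⊗ₖ single j i (1 : RatFunc ℂ)

section Lifts

variable {K : Type*} [Semiring K] {n : ℕ} (X Y : Matrix (Fin n × Fin n) (Fin n × Fin n) K)

lemma lift12_mul : lift12 (X * Y) = lift12 X * lift12 Y := by
  ext ⟨a, b, c⟩ ⟨d, e, f⟩
  simp [lift12, mul_apply, Fintype.sum_prod_type]

lemma lift13_mul : lift13 (X * Y) = lift13 X * lift13 Y := by
  ext ⟨a, b, c⟩ ⟨d, e, f⟩
  simp [lift13, mul_apply, Fintype.sum_prod_type]

lemma lift23_mul : lift23 (X * Y) = lift23 X * lift23 Y := by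
  ext ⟨a, b, c⟩ ⟨d, e, f⟩
  simp [lift23, mul_apply, Fintype.sum_prod_type, Finset.mul_sum]

lemma lift12_one : lift12 (1 : Matrix (Fin n × Fin n) (Fin n × Fin n) K) = 1 := by
  ext ⟨a, b, c⟩ ⟨d, e, f⟩
  simp only [lift12, of_apply, one_apply, Prod.mk.injEq, ite_and, ite_mul, one_mul, zero_mul]

lemma lift13_one : lift13 (1 : Matrix (Fin n × Fin n) (Fin n × Fin n) K) = 1 := by
  ext ⟨a, b, c⟩ ⟨d, e, f⟩
  simp only [lift13, of_apply, one_apply, Prod.mk.injEq, ite_and, ite_mul, one_mul, zero_mul]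
  split_ifs <;> rfl

lemma lift23_one : lift23 (1 : Matrix (Fin n × Fin n) (Fin n × Fin n) K) = 1 := by
  ext ⟨a, b, c⟩ ⟨d, e, f⟩
  simp only [lift23, of_apply, one_apply, Prod.mk.injEq, ite_and, ite_mul, one_mul, zero_mul]

lemma lift12_map {L : Type*} [Semiring L] (f : K →+* L) :
    lift12 (X.map f) = (lift12 X).map f := by
  ext ⟨a, b, c⟩ ⟨d, e, f'⟩
  simp [lift12, apply_ite f]

lemma lift13_map {L : Type*} [Semiring L] (f : K →+* L) :
    lift13 (X.map f) = (lift13 X).map f := by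
  ext ⟨a, b, c⟩ ⟨d, e, f'⟩
  simp [lift13, apply_ite f]

lemma lift23_map {L : Type*} [Semiring L] (f : K →+* L) :
    lift23 (X.map f) = (lift23 X).map f := by
  ext ⟨a, b, c⟩ ⟨d, e, f'⟩
  simp [lift23, apply_ite f]

lemma lift12_transpose : lift12 Xᵀ = (lift12 X)ᵀ := by
  ext ⟨a, b, c⟩ ⟨d, e, f⟩
  simp [lift12, eq_comm]

lemma lift13_transpose : lift13 Xᵀ = (lift13 X)ᵀ := by
  ext ⟨a, b, c⟩ ⟨d, e, f⟩
  simp [lift13, eq_comm]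

lemma lift23_transpose : lift23 Xᵀ = (lift23 X)ᵀ := by
  ext ⟨a, b, c⟩ ⟨d, e, f⟩
  simp [lift23, eq_comm]

def reverse3 (n : ℕ) : Fin n × Fin n × Fin n ≃ Fin n × Fin n × Fin n where
  toFun p := (p.2.2, p.2.1, p.1)
  invFun p := (p.2.2, p.2.1, p.1)

lemma lift12_submatrix_reverse3 :
    (lift12 X).submatrix (reverse3 n) (reverse3 n) = lift23 (flip21 X) := by
  ext ⟨a, b, c⟩ ⟨d, e, f⟩
  simp [lift12, lift23, flip21, reverse3]

lemma lift13_submatrix_reverse3 :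
    (lift13 X).submatrix (reverse3 n) (reverse3 n) = lift13 (flip21 X) := by
  ext ⟨a, b, c⟩ ⟨d, e, f⟩
  simp [lift13, flip21, reverse3]

lemma lift23_submatrix_reverse3 :
    (lift23 X).submatrix (reverse3 n) (reverse3 n) = lift12 (flip21 X) := by
  ext ⟨a, b, c⟩ ⟨d, e, f⟩
  simp [lift12, lift23, flip21, reverse3]

end Lifts

lemma MonoidHom.map_nonsing_inv {m m' K : Type*} [Fintype m] [DecidableEq m] [Fintype m']
    [DecidableEq m'] [CommRing K] (f : Matrix m m K →* Matrix m' m' K) {A : Matrix m m K}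
    (hA : IsUnit A) : f A⁻¹ = (f A)⁻¹ :=
  (inv_eq_right_inv (by rw [← map_mul, mul_nonsing_inv _ ((isUnit_iff_isUnit_det A).mp hA),
    map_one])).symm

section QYBE

variable {K : Type*} {n : ℕ} {X : Matrix (Fin n × Fin n) (Fin n × Fin n) K}

lemma qybe_flip21 [Semiring K] (h : QYBE X) : QYBE (flip21 X) := by
  have h' := congrArg (·.submatrix (reverse3 n) (reverse3 n)) h
  simp only [← submatrix_mul_equiv _ _ _ (reverse3 n), lift12_submatrix_reverse3,
    lift13_submatrix_reverse3, lift23_submatrix_reverse3] at h'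
  simpa only [QYBE, mul_assoc] using h'.symm

lemma qybe_flip21_iff [Semiring K] : QYBE (flip21 X) ↔ QYBE X :=
  ⟨qybe_flip21, qybe_flip21⟩

lemma qybe_transpose_iff [CommSemiring K] : QYBE Xᵀ ↔ QYBE X := by
  simp only [QYBE, lift12_transpose, lift13_transpose, lift23_transpose, ← transpose_mul,
    transpose_inj, mul_assoc]
  exact eq_comm

lemma qybe_map_iff {L : Type*} [Semiring K] [Semiring L] {f : K →+* L}
    (hf : Function.Injective f) : QYBE (X.map f) ↔ QYBE X := by
  simp only [QYBE, lift12_map, lift13_map, lift23_map, ← Matrix.map_mul]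
  exact (map_injective hf).eq_iff

lemma qybe_nonsing_inv [CommRing K] (hX : IsUnit X) (h : QYBE X) : QYBE X⁻¹ := by
  have h12 := (⟨⟨lift12, lift12_one⟩, lift12_mul⟩ : _ →* _).map_nonsing_inv hX
  have h13 := (⟨⟨lift13, lift13_one⟩, lift13_mul⟩ : _ →* _).map_nonsing_inv hX
  have h23 := (⟨⟨lift23, lift23_one⟩, lift23_mul⟩ : _ →* _).map_nonsing_inv hX
  simp only [MonoidHom.coe_mk, OneHom.coe_mk] at h12 h13 h23
  simp only [QYBE, mul_assoc] at h
  simp only [QYBE, h12, h13, h23, ← Matrix.mul_inv_rev, h]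

lemma qybe_nonsing_inv_iff [CommRing K] (hX : IsUnit X) : QYBE X⁻¹ ↔ QYBE X := by
  refine ⟨fun h => ?_, qybe_nonsing_inv hX⟩
  simpa [nonsing_inv_nonsing_inv _ ((isUnit_iff_isUnit_det X).mp hX)] using
    qybe_nonsing_inv (isUnit_nonsing_inv_iff.mpr hX) h

end QYBE

section Pflip

variable {n : ℕ}

lemma Pflip_apply (p q : Fin n × Fin n) :
    Pflip n p q = if p.1 = q.2 ∧ p.2 = q.1 then 1 else 0 := by
  simp [Pflip, Matrix.sum_apply, single, ite_and, eq_comm]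

lemma Pflip_mul (Z : Matrix (Fin n × Fin n) (Fin n × Fin n) (RatFunc ℂ)) :
    Pflip n * Z = of fun p q => Z p.swap q := by
  ext ⟨a, b⟩ q
  simp [mul_apply, Pflip_apply, Fintype.sum_prod_type, ite_and]

lemma mul_Pflip (Z : Matrix (Fin n × Fin n) (Fin n × Fin n) (RatFunc ℂ)) :
    Z * Pflip n = of fun p q => Z p q.swap := by
  ext p ⟨c, d⟩
  simp [mul_apply, Pflip_apply, Fintype.sum_prod_type, ite_and]

lemma Pflip_mul_self : Pflip n * Pflip n = 1 := by
  ext ⟨a, b⟩ ⟨c, d⟩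
  simp [Pflip_mul, Pflip_apply, one_apply, and_comm]

lemma flip21_eq_Pflip_mul_mul_Pflip (Z : Matrix (Fin n × Fin n) (Fin n × Fin n) (RatFunc ℂ)) :
    flip21 Z = Pflip n * Z * Pflip n := by
  rw [Pflip_mul, mul_Pflip]
  rfl

end Pflip

theorem ggs_formulations_equiv_general (n : ℕ) (σ : RatFunc ℂ →+* RatFunc ℂ)
    (R1 R2 : Matrix (Fin n × Fin n) (Fin n × Fin n) (RatFunc ℂ))
    (hU : IsUnit (Pflip n * R1))
    (h2 : Pflip n * (R2.transpose).map σ = (Pflip n * R1)⁻¹) :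
    (R2.transpose).map σ = flip21 R1⁻¹ ∧ (QYBE R1 ↔ QYBE R2) := by
  have hR1 : IsUnit R1 := isUnit_of_mul_isUnit_right hU
  have hR2 : R2ᵀ.map σ = flip21 R1⁻¹ := calc
    R2ᵀ.map σ = Pflip n * (Pflip n * R2ᵀ.map σ) := by rw [← mul_assoc, Pflip_mul_self, one_mul]
    _ = Pflip n * R1⁻¹ * Pflip n := by
      rw [h2, Matrix.mul_inv_rev, inv_eq_right_inv Pflip_mul_self, mul_assoc]
    _ = flip21 R1⁻¹ := (flip21_eq_Pflip_mul_mul_Pflip _).symm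
  refine ⟨hR2, ?_⟩
  calc QYBE R1 ↔ QYBE R1⁻¹ := (qybe_nonsing_inv_iff hR1).symm
    _ ↔ QYBE (flip21 R1⁻¹) := qybe_flip21_iff.symm
    _ ↔ QYBE (R2ᵀ.map σ) := by rw [hR2]
    _ ↔ QYBE R2ᵀ := qybe_map_iff σ.injective
    _ ↔ QYBE R2 := qybe_transpose_iff

/-- Equivalence of the two formulations of the GGS matrix.  Let `σ : ℂ(q) → ℂ(q)` be
the substitution `q ↦ q⁻¹`, applied entrywise, and `ᵀ` the transposition of both
tensor factors.  If `R₁ - (R₂)ᵀ_{q⁻¹} = (q - q⁻¹)P` and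
`P·(R₂)ᵀ_{q⁻¹} = (P·R₁)⁻¹` (with `P·R₁` invertible), then
`(R₂)ᵀ_{q⁻¹} = (R₁⁻¹)²¹`, and `R₁` satisfies the QYBE iff `R₂` does. -/
theorem ggs_formulations_equiv (n : ℕ) (σ : RatFunc ℂ →+* RatFunc ℂ)
    (hσ : σ RatFunc.X = (RatFunc.X : RatFunc ℂ)⁻¹)
    (R1 R2 : Matrix (Fin n × Fin n) (Fin n × Fin n) (RatFunc ℂ))
    (h1 : R1 - (R2.transpose).map σ =
      (RatFunc.X - (RatFunc.X : RatFunc ℂ)⁻¹) • Pflip n)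
    (hU : IsUnit (Pflip n * R1))
    (h2 : Pflip n * (R2.transpose).map σ = (Pflip n * R1)⁻¹) :
    (R2.transpose).map σ = flip21 R1⁻¹ ∧ (QYBE R1 ↔ QYBE R2) :=
  ggs_formulations_equiv_general n σ R1 R2 hU h2
end

section
/- Let \mathfrak{h} be the diagonal matrices in gl(n), and let y \in \mathfrak{h} \otimes \mathfrak{h}, and R \in Mat_n(\mathbb{C}(q)) \otimes Mat_n(\mathbb{C}(q)). Suppose [1 \otimes x + x \otimes 1, R] = 0 for every x \in \mathfrak{l}, where \mathfrak{l} \subseteq \mathfrak{h} is a subspace and y \in \mathfrak{l} \wedge \mathfrak{l}. Then q^y R q^y satisfies the quantum Yang-Baxter equation if and only if R does. -/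
set_option synthInstance.maxHeartbeats 1000000

open Matrix Kronecker

lemma sum3_comm {n : ℕ} (g : Fin n → Fin n → Fin n → ℂ) :
    ∑ x : Fin n, ∑ y : Fin n, ∑ z : Fin n, g z x y = ∑ i, ∑ j, ∑ k, g i j k := by
  rw [show (∑ x : Fin n, ∑ y : Fin n, ∑ z : Fin n, g z x y)
      = ∑ x : Fin n, ∑ z : Fin n, ∑ y : Fin n, g z x y from
    Finset.sum_congr rfl fun x _ => Finset.sum_comm .., Finset.sum_comm]

lemma entryL {n : ℕ} (X : Matrix (Fin n × Fin n) (Fin n × Fin n) ℂ) (a b c d e f : Fin n) :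
    (lift12 X * lift13 X * lift23 X) (a,b,c) (d,e,f)
      = ∑ i, ∑ j, ∑ k, X (a,b) (i,j) * (X (i,c) (d,k) * X (j,k) (e,f)) := by
  simp [Matrix.mul_apply, lift12, lift13, lift23, Fintype.sum_prod_type, mul_ite, ite_mul,
    mul_zero, zero_mul, Finset.mul_sum, Finset.sum_mul, mul_assoc]
  exact sum3_comm _

lemma entryR {n : ℕ} (X : Matrix (Fin n × Fin n) (Fin n × Fin n) ℂ) (a b c d e f : Fin n) :
    (lift23 X * lift13 X * lift12 X) (a,b,c) (d,e,f)
      = ∑ i, ∑ j, ∑ k, X (b,c) (j,k) * (X (a,k) (i,f) * X (i,j) (d,e)) := by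
  simp [Matrix.mul_apply, lift12, lift13, lift23, Fintype.sum_prod_type, mul_ite, ite_mul,
    mul_zero, zero_mul, Finset.mul_sum, Finset.sum_mul, mul_assoc]

/-- Twisting by `q^y` with `y ∈ 𝔩 ∧ 𝔩` preserves the QYBE.  Here `𝔩` is a subspace of
the diagonal matrices `𝔥 ⊂ gl(n)`, `y ∈ 𝔩 ∧ 𝔩 ⊂ 𝔥 ⊗ 𝔥` is the diagonal matrix (on
`ℂⁿ ⊗ ℂⁿ`) with entries `yd`, and `q^y` is the diagonal matrix with entries
`q^{yd p}`.  If `[1 ⊗ x + x ⊗ 1, R] = 0` for every `x ∈ 𝔩`, then `q^y R q^y`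
satisfies the quantum Yang–Baxter equation iff `R` does. -/
theorem twist_qybe_iff (n : ℕ) (q : ℂ) (hq : q ≠ 0)
    (𝔩 : Submodule ℂ (Matrix (Fin n) (Fin n) ℂ)) (hdiag : ∀ x ∈ 𝔩, x.IsDiag)
    (R : Matrix (Fin n × Fin n) (Fin n × Fin n) ℂ)
    (yd : Fin n × Fin n → ℂ)
    (hy : ∃ (N : ℕ) (u v : Fin N → Matrix (Fin n) (Fin n) ℂ),
      (∀ i, u i ∈ 𝔩) ∧ (∀ i, v i ∈ 𝔩) ∧
        Matrix.diagonal yd = ∑ i, (u i ⊗ₖ v i - v i ⊗ₖ u i))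
    (hcomm : ∀ x ∈ 𝔩,
      ((1 : Matrix (Fin n) (Fin n) ℂ) ⊗ₖ x + x ⊗ₖ (1 : Matrix (Fin n) (Fin n) ℂ)) * R
        = R * ((1 : Matrix (Fin n) (Fin n) ℂ) ⊗ₖ x + x ⊗ₖ (1 : Matrix (Fin n) (Fin n) ℂ))) :
    QYBE (Matrix.diagonal (fun p => q ^ yd p) * R * Matrix.diagonal (fun p => q ^ yd p))
      ↔ QYBE R := by
  obtain ⟨N, u, v, hu, hv, hyeq⟩ := hy
  -- entrywise description of yd
  have hyd : ∀ s t : Fin n, yd (s, t) = ∑ m, (u m s s * v m t t - v m s s * u m t t) := by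
    intro s t
    have h := congrFun (congrFun hyeq (s, t)) (s, t)
    simpa [Matrix.sum_apply, Matrix.sub_apply, Matrix.kroneckerMap_apply] using h
  -- support condition from hcomm
  have hsupp : ∀ x ∈ 𝔩, ∀ (i j k l : Fin n), R (i, j) (k, l) ≠ 0 →
      x i i + x j j = x k k + x l l := by
    intro x hx i j k l hR
    have hxd := hdiag x hx
    have hd1 : ((1 : Matrix (Fin n) (Fin n) ℂ) ⊗ₖ x + x ⊗ₖ (1 : Matrix (Fin n) (Fin n) ℂ))
        = Matrix.diagonal (fun p : Fin n × Fin n => x p.1 p.1 + x p.2 p.2) := by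
      ext ⟨a1, b1⟩ ⟨c1, d1⟩
      by_cases h1 : a1 = c1 <;> by_cases h2 : b1 = d1
      · subst h1; subst h2
        simp [Matrix.kroneckerMap_apply, Matrix.one_apply, Matrix.diagonal_apply, add_comm]
      · simp [Matrix.kroneckerMap_apply, Matrix.one_apply, Matrix.diagonal_apply,
          Prod.ext_iff, h1, h2, hxd h2]
      · simp [Matrix.kroneckerMap_apply, Matrix.one_apply, Matrix.diagonal_apply,
          Prod.ext_iff, h1, h2, hxd h1]
      · simp [Matrix.kroneckerMap_apply, Matrix.one_apply, Matrix.diagonal_apply,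
          Prod.ext_iff, h1, h2, hxd h1]
    have h2 := congrFun (congrFun (hcomm x hx) (i, j)) (k, l)
    rw [hd1] at h2
    simp only [Matrix.diagonal_mul, Matrix.mul_diagonal] at h2
    have h3 : (x i i + x j j) * R (i, j) (k, l) = (x k k + x l l) * R (i, j) (k, l) := by
      rw [h2]; ring
    exact mul_right_cancel₀ hR h3
  set E : Fin n × Fin n × Fin n → ℂ :=
    fun p => yd (p.1, p.2.1) + yd (p.1, p.2.2) + yd (p.2.1, p.2.2) with hE
  set D3 : Matrix (Fin n × Fin n × Fin n) (Fin n × Fin n × Fin n) ℂ :=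
    Matrix.diagonal (fun p => q ^ E p) with hD3
  set R' : Matrix (Fin n × Fin n) (Fin n × Fin n) ℂ :=
    Matrix.diagonal (fun p => q ^ yd p) * R * Matrix.diagonal (fun p => q ^ yd p) with hR'def
  have hR' : ∀ p r, R' p r = q ^ yd p * R p r * q ^ yd r := by
    intro p r
    simp [hR'def, Matrix.diagonal_mul, Matrix.mul_diagonal, mul_assoc]
  -- key scalar identity, LHS version
  have keyL : ∀ a b c d e f i j k : Fin n,
      R (a,b) (i,j) ≠ 0 → R (i,c) (d,k) ≠ 0 → R (j,k) (e,f) ≠ 0 →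
      yd (a,b) + yd (i,j) + yd (i,c) + yd (d,k) + yd (j,k) + yd (e,f)
        = E (a,b,c) + E (d,e,f) := by
    intro a b c d e f i j k h1 h2 h3
    simp only [hE]
    simp only [hyd, ← Finset.sum_add_distrib]
    refine Finset.sum_congr rfl fun m _ => ?_
    have hu1 := hsupp (u m) (hu m) a b i j h1
    have hu2 := hsupp (u m) (hu m) i c d k h2
    have hu3 := hsupp (u m) (hu m) j k e f h3
    have gv1 := hsupp (v m) (hv m) a b i j h1
    have gv2 := hsupp (v m) (hv m) i c d k h2
    have gv3 := hsupp (v m) (hv m) j k e f h3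
    linear_combination (-(v m d d) + v m i i - v m k k) * hu1
      + (u m d d - u m i i + u m k k) * gv1
      + (v m a a + v m b b - v m i i) * hu2
      + (-(u m a a) - u m b b + u m i i) * gv2
      + (-(v m d d)) * hu3 + (u m d d) * gv3
  -- key scalar identity, RHS version
  have keyR : ∀ a b c d e f i j k : Fin n,
      R (b,c) (j,k) ≠ 0 → R (a,k) (i,f) ≠ 0 → R (i,j) (d,e) ≠ 0 →
      yd (b,c) + yd (j,k) + yd (a,k) + yd (i,f) + yd (i,j) + yd (d,e)
        = E (a,b,c) + E (d,e,f) := by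
    intro a b c d e f i j k h1 h2 h3
    simp only [hE]
    simp only [hyd, ← Finset.sum_add_distrib]
    refine Finset.sum_congr rfl fun m _ => ?_
    have hu1 := hsupp (u m) (hu m) b c j k h1
    have hu2 := hsupp (u m) (hu m) a k i f h2
    have hu3 := hsupp (u m) (hu m) i j d e h3
    have gv1 := hsupp (v m) (hv m) b c j k h1
    have gv2 := hsupp (v m) (hv m) a k i f h2
    have gv3 := hsupp (v m) (hv m) i j d e h3
    linear_combination (v m a a - v m d d - v m e e + v m i i + v m j j) * hu1
      + (-(u m a a) + u m d d + u m e e - u m i i - u m j j) * gv1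
      + (-(v m d d) - v m e e + v m i i) * hu2
      + (u m d d + u m e e - u m i i) * gv2
      + (v m a a + v m b b + v m c c - v m d d - v m e e) * hu3
      + (-(u m a a) - u m b b - u m c c + u m d d + u m e e) * gv3
  -- matrix claims
  have claimL : lift12 R' * lift13 R' * lift23 R'
      = D3 * (lift12 R * lift13 R * lift23 R) * D3 := by
    ext ⟨a, b, c⟩ ⟨d, e, f⟩
    rw [show (D3 * (lift12 R * lift13 R * lift23 R) * D3) (a,b,c) (d,e,f)
        = q ^ E (a,b,c) * (lift12 R * lift13 R * lift23 R) (a,b,c) (d,e,f) * q ^ E (d,e,f) by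
      simp [hD3, Matrix.diagonal_mul, Matrix.mul_diagonal]]
    rw [entryL, entryL]
    simp only [Finset.mul_sum, Finset.sum_mul]
    refine Finset.sum_congr rfl fun i _ => Finset.sum_congr rfl fun j _ =>
      Finset.sum_congr rfl fun k _ => ?_
    simp only [hR']
    by_cases h1 : R (a,b) (i,j) = 0
    · simp [h1]
    by_cases h2 : R (i,c) (d,k) = 0
    · simp [h2]
    by_cases h3 : R (j,k) (e,f) = 0
    · simp [h3]
    have hc : q ^ yd (a,b) * q ^ yd (i,j) * q ^ yd (i,c) * q ^ yd (d,k)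
        * q ^ yd (j,k) * q ^ yd (e,f) = q ^ E (a,b,c) * q ^ E (d,e,f) := by
      rw [← Complex.cpow_add _ _ hq, ← Complex.cpow_add _ _ hq, ← Complex.cpow_add _ _ hq,
        ← Complex.cpow_add _ _ hq, ← Complex.cpow_add _ _ hq, ← Complex.cpow_add _ _ hq]
      congr 1
      linear_combination keyL a b c d e f i j k h1 h2 h3
    linear_combination (R (a,b) (i,j) * (R (i,c) (d,k) * R (j,k) (e,f))) * hc
  have claimR : lift23 R' * lift13 R' * lift12 R'
      = D3 * (lift23 R * lift13 R * lift12 R) * D3 := by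
    ext ⟨a, b, c⟩ ⟨d, e, f⟩
    rw [show (D3 * (lift23 R * lift13 R * lift12 R) * D3) (a,b,c) (d,e,f)
        = q ^ E (a,b,c) * (lift23 R * lift13 R * lift12 R) (a,b,c) (d,e,f) * q ^ E (d,e,f) by
      simp [hD3, Matrix.diagonal_mul, Matrix.mul_diagonal]]
    rw [entryR, entryR]
    simp only [Finset.mul_sum, Finset.sum_mul]
    refine Finset.sum_congr rfl fun i _ => Finset.sum_congr rfl fun j _ =>
      Finset.sum_congr rfl fun k _ => ?_
    simp only [hR']
    by_cases h1 : R (b,c) (j,k) = 0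
    · simp [h1]
    by_cases h2 : R (a,k) (i,f) = 0
    · simp [h2]
    by_cases h3 : R (i,j) (d,e) = 0
    · simp [h3]
    have hc : q ^ yd (b,c) * q ^ yd (j,k) * q ^ yd (a,k) * q ^ yd (i,f)
        * q ^ yd (i,j) * q ^ yd (d,e) = q ^ E (a,b,c) * q ^ E (d,e,f) := by
      rw [← Complex.cpow_add _ _ hq, ← Complex.cpow_add _ _ hq, ← Complex.cpow_add _ _ hq,
        ← Complex.cpow_add _ _ hq, ← Complex.cpow_add _ _ hq, ← Complex.cpow_add _ _ hq]
      congr 1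
      linear_combination keyR a b c d e f i j k h1 h2 h3
    linear_combination (R (b,c) (j,k) * (R (a,k) (i,f) * R (i,j) (d,e))) * hc
  -- invertibility of D3
  have hEne : ∀ p, q ^ E p ≠ 0 := by
    intro p h
    rw [Complex.cpow_eq_zero_iff] at h
    exact hq h.1
  set Di : Matrix (Fin n × Fin n × Fin n) (Fin n × Fin n × Fin n) ℂ :=
    Matrix.diagonal (fun p => (q ^ E p)⁻¹) with hDi
  have hDDi : D3 * Di = 1 := by
    rw [hD3, hDi, Matrix.diagonal_mul_diagonal]
    rw [show (fun p => q ^ E p * (q ^ E p)⁻¹) = fun _ => (1 : ℂ) from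
      funext fun p => mul_inv_cancel₀ (hEne p)]
    exact Matrix.diagonal_one
  have hDiD : Di * D3 = 1 := by
    rw [hD3, hDi, Matrix.diagonal_mul_diagonal]
    rw [show (fun p => (q ^ E p)⁻¹ * q ^ E p) = fun _ => (1 : ℂ) from
      funext fun p => inv_mul_cancel₀ (hEne p)]
    exact Matrix.diagonal_one
  have hDiDA : ∀ A : Matrix (Fin n × Fin n × Fin n) (Fin n × Fin n × Fin n) ℂ,
      Di * (D3 * A) = A := by
    intro A; rw [← Matrix.mul_assoc, hDiD, Matrix.one_mul]
  constructor
  · intro h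
    unfold QYBE at h ⊢
    rw [claimL, claimR] at h
    have h1 := congrArg (fun M => Di * M * Di) h
    simpa [Matrix.mul_assoc, hDDi, hDiDA, Matrix.mul_one] using h1
  · intro h
    unfold QYBE at h ⊢
    rw [claimL, claimR, h]
end
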